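/- arXiv:math/0504413 — 9 statements merged into one kernel-verified Lean document; each statement's English description precedes it below -/
import Mathlib

section
/- Let A = {a_s + n_s ℤ}_{s=1}^k be an m-cover of ℤ and let m_1, ..., m_k be integers. Define S(A) = { fractional part of Σ_{s∈I} m_s/n_s : I ⊆ {1,...,k} }. Then |S(A)| ≤ 2^{k−m}. -/
open Finset

open Polynomial


noncomputable def e2pi (q : ℚ) : ℂ := Complex.exp (2 * Real.pi * Complex.I * q)

lemma e2pi_ne_zero (q : ℚ) : e2pi q ≠ 0 := Complex.exp_ne_zero _

lemma e2pi_add (p q : ℚ) : e2pi (p + q) = e2pi p * e2pi q := by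
  rw [e2pi, e2pi, e2pi, ← Complex.exp_add]
  congr 1
  push_cast
  ring

lemma e2pi_int (z : ℤ) : e2pi z = 1 := by
  rw [e2pi]
  have := Complex.exp_int_mul_two_pi_mul_I z
  rw [← this]
  congr 1
  push_cast
  ring

lemma e2pi_eq_of_sub_int {p q : ℚ} (h : ∃ z : ℤ, p - q = z) : e2pi p = e2pi q := by
  obtain ⟨z, hz⟩ := h
  have : p = q + z := by linarith [hz]
  rw [this, e2pi_add, e2pi_int, mul_one]

lemma e2pi_inj {p q : ℚ} (h : e2pi p = e2pi q) : Int.fract p = Int.fract q := by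
  rw [e2pi, e2pi, Complex.exp_eq_exp_iff_exists_int] at h
  obtain ⟨z, hz⟩ := h
  have h2 : (2 * Real.pi * Complex.I) ≠ 0 := by
    simp [Real.pi_ne_zero, Complex.I_ne_zero]
  have : (p : ℂ) = ((q + z : ℚ) : ℂ) := by
    refine mul_left_cancel₀ h2 ?_
    rw [hz]; push_cast; ring
  have hpq : p = q + z := by exact_mod_cast this
  rw [Int.fract_eq_fract]
  exact ⟨z, by rw [hpq]; ring⟩

lemma e2pi_pow (q : ℚ) (x : ℕ) : e2pi q ^ x = e2pi (x * q) := by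
  rw [e2pi, e2pi, ← Complex.exp_nat_mul]
  congr 1
  push_cast
  ring

lemma e2pi_sum {α : Type*} (I : Finset α) (f : α → ℚ) :
    e2pi (∑ s ∈ I, f s) = ∏ s ∈ I, e2pi (f s) := by
  classical
  induction I using Finset.cons_induction with
  | empty => simpa using e2pi_int 0
  | cons a s ha ih => rw [Finset.sum_cons, Finset.prod_cons, e2pi_add, ih]


lemma vand_zero {S : Finset ℚ} (ω : ℚ → ℂ)
    (hinj : ∀ p ∈ S, ∀ q ∈ S, ω p = ω q → p = q)
    (c : ℚ → ℂ) (h : ∀ x : ℕ, ∑ θ ∈ S, c θ * ω θ ^ x = 0) :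
    ∀ θ ∈ S, c θ = 0 := by
  intro θ0 hθ0
  set p : Polynomial ℂ := ∏ θ ∈ S.erase θ0, (X - C (ω θ)) with hp
  have key : ∑ θ ∈ S, c θ * p.eval (ω θ) = 0 := by
    calc ∑ θ ∈ S, c θ * p.eval (ω θ)
        = ∑ θ ∈ S, ∑ x ∈ Finset.range (p.natDegree + 1), p.coeff x * (c θ * ω θ ^ x) := by
          refine Finset.sum_congr rfl fun θ _ => ?_
          rw [p.eval_eq_sum_range, Finset.mul_sum]
          exact Finset.sum_congr rfl fun x _ => by ring
      _ = ∑ x ∈ Finset.range (p.natDegree + 1), p.coeff x * ∑ θ ∈ S, c θ * ω θ ^ x := by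
          rw [Finset.sum_comm]
          exact Finset.sum_congr rfl fun x _ => by rw [Finset.mul_sum]
      _ = 0 := by simp [h]
  rw [← Finset.add_sum_erase _ _ hθ0] at key
  have hz : ∑ θ ∈ S.erase θ0, c θ * p.eval (ω θ) = 0 := by
    refine Finset.sum_eq_zero fun θ hθ => ?_
    have : p.eval (ω θ) = 0 := by
      rw [hp]
      simp only [eval_prod, eval_sub, eval_X, eval_C]
      exact Finset.prod_eq_zero hθ (by ring)
    rw [this, mul_zero]
  rw [hz, add_zero] at key
  have hne : p.eval (ω θ0) ≠ 0 := by
    rw [hp]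
    simp only [eval_prod, eval_sub, eval_X, eval_C]
    refine Finset.prod_ne_zero_iff.mpr fun θ hθ h0 => ?_
    have : ω θ = ω θ0 := by linear_combination -h0
    exact Finset.ne_of_mem_erase hθ (hinj θ (Finset.mem_of_mem_erase hθ) θ0 hθ0 this)
  exact (mul_eq_zero.mp key).resolve_right hne

lemma comb_lemma {α : Type*} [DecidableEq α] (m : ℕ) :
    ∀ (C : Finset (Finset α)) (c : Finset α → ℂ),
    (∀ I ∈ C, c I ≠ 0) → C.Nonempty →
    (∀ J : Finset α, J.card < m → ∑ I ∈ C.filter (fun I => J ⊆ I), c I = 0) →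
    2 ^ m ≤ C.card := by
  induction m with
  | zero => intro C c _ hne _; simpa using Finset.card_pos.mpr hne
  | succ m ih =>
    intro C c hc hne h
    have h0 : ∑ I ∈ C, c I = 0 := by
      have := h ∅ (Nat.succ_pos m)
      simpa using this
    have h2 : 1 < C.card := by
      by_contra hle
      push_neg at hle
      obtain ⟨I, hI⟩ := hne
      have hCeq : C = {I} := by
        apply Finset.eq_singleton_iff_unique_mem.mpr
        exact ⟨hI, fun J hJ => Finset.card_le_one.mp hle J hJ I hI⟩
      rw [hCeq, Finset.sum_singleton] at h0
      exact hc I hI h0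
    obtain ⟨I₁, hI₁, I₂, hI₂, h12⟩ := Finset.one_lt_card.mp h2
    obtain ⟨x, hx⟩ : ∃ x, (∃ I ∈ C, x ∈ I) ∧ (∃ I ∈ C, x ∉ I) := by
      by_contra hcon
      push_neg at hcon
      apply h12
      ext y
      constructor
      · intro hy
        by_contra hy2
        exact hy2 (hcon y ⟨I₁, hI₁, hy⟩ I₂ hI₂)
      · intro hy
        by_contra hy2
        exact hy2 (hcon y ⟨I₂, hI₂, hy⟩ I₁ hI₁)
    set C₁ := C.filter (fun I => x ∈ I) with hC₁
    set C₂ := C.filter (fun I => x ∉ I) with hC₂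
    have hsum1 : ∀ J : Finset α, J.card < m → ∑ I ∈ C₁.filter (fun I => J ⊆ I), c I = 0 := by
      intro J hJ
      have heq : C₁.filter (fun I => J ⊆ I) = C.filter (fun I => insert x J ⊆ I) := by
        ext I
        simp only [hC₁, Finset.mem_filter, Finset.insert_subset_iff]
        tauto
      rw [heq]
      refine h _ ?_
      calc (insert x J).card ≤ J.card + 1 := Finset.card_insert_le x J
        _ < m + 1 := by omega
    have hsum2 : ∀ J : Finset α, J.card < m → ∑ I ∈ C₂.filter (fun I => J ⊆ I), c I = 0 := by
      intro J hJ
      have hsplit := Finset.sum_filter_add_sum_filter_not (C.filter (fun I => J ⊆ I))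
        (fun I => x ∈ I) c
      have e1 : (C.filter (fun I => J ⊆ I)).filter (fun I => x ∈ I)
          = C₁.filter (fun I => J ⊆ I) := by
        rw [hC₁, Finset.filter_comm]
      have e2 : (C.filter (fun I => J ⊆ I)).filter (fun I => ¬ x ∈ I)
          = C₂.filter (fun I => J ⊆ I) := by
        rw [hC₂, Finset.filter_comm]
      rw [e1, e2, hsum1 J hJ, zero_add, h J (by omega)] at hsplit
      exact hsplit
    have hne1 : C₁.Nonempty := by
      obtain ⟨I, hI, hxI⟩ := hx.1
      exact ⟨I, Finset.mem_filter.mpr ⟨hI, hxI⟩⟩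
    have hne2 : C₂.Nonempty := by
      obtain ⟨I, hI, hxI⟩ := hx.2
      exact ⟨I, Finset.mem_filter.mpr ⟨hI, hxI⟩⟩
    have hb1 := ih C₁ c (fun I hI => hc I (Finset.mem_filter.mp hI).1) hne1 hsum1
    have hb2 := ih C₂ c (fun I hI => hc I (Finset.mem_filter.mp hI).1) hne2 hsum2
    have hcard : C₁.card + C₂.card = C.card :=
      Finset.card_filter_add_card_filter_not (fun I => x ∈ I)
    calc 2 ^ (m + 1) = 2 ^ m + 2 ^ m := by ring
      _ ≤ C₁.card + C₂.card := Nat.add_le_add hb1 hb2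
      _ = C.card := hcard

/-- If `{a s + n s ℤ}` is an `m`-cover of `ℤ`, then the set of fractional parts of the
subset sums `∑_{s∈I} m' s / n s` has at most `2^(k-m)` elements. -/
theorem stmt1 (k m : ℕ) (a : Fin k → ℤ) (n : Fin k → ℕ) (hn : ∀ s, 0 < n s)
    (hcov : ∀ x : ℤ, m ≤ (univ.filter fun s => (n s : ℤ) ∣ x - a s).card)
    (m' : Fin k → ℤ) :
    ((univ : Finset (Finset (Fin k))).image fun I =>
        Int.fract (∑ s ∈ I, (m' s : ℚ) / (n s : ℚ))).card ≤ 2 ^ (k - m) := by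
  classical
  set φ : Finset (Fin k) → ℚ := fun I => Int.fract (∑ s ∈ I, (m' s : ℚ) / (n s : ℚ)) with hφ
  set S := (univ : Finset (Finset (Fin k))).image φ with hS
  have hnq : ∀ s, (n s : ℚ) ≠ 0 := fun s => Nat.cast_ne_zero.mpr (hn s).ne'
  set r : ℕ → Fin k → ℂ := fun x s => e2pi ((m' s : ℚ) * ((x : ℚ) - (a s : ℚ)) / (n s : ℚ))
    with hr
  set ε : Finset (Fin k) → ℂ :=
    fun I => e2pi (- ∑ s ∈ I, ((m' s : ℚ) * (a s : ℚ)) / (n s : ℚ)) with hε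
  set c : Finset (Fin k) → ℂ := fun I => (-1 : ℂ) ^ I.card * ε I with hcdef
  -- Claim A
  have claimA : ∀ (x : ℕ) (I : Finset (Fin k)),
      ∏ s ∈ I, (- r x s) = c I * e2pi (φ I) ^ x := by
    intro x I
    have h1 : ∏ s ∈ I, (- r x s) = (-1 : ℂ) ^ I.card * ∏ s ∈ I, r x s := by
      rw [show (∏ s ∈ I, (- r x s)) = ∏ s ∈ I, ((-1 : ℂ) * r x s) from
        Finset.prod_congr rfl fun s _ => by ring]
      rw [Finset.prod_mul_distrib, Finset.prod_const]
    have h2 : ∏ s ∈ I, r x s = e2pi (φ I) ^ x * ε I := by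
      rw [hr]
      simp only
      rw [← e2pi_sum]
      have hsum : ∑ s ∈ I, (m' s : ℚ) * ((x : ℚ) - (a s : ℚ)) / (n s : ℚ)
          = (x : ℚ) * (∑ s ∈ I, (m' s : ℚ) / (n s : ℚ))
            + (- ∑ s ∈ I, ((m' s : ℚ) * (a s : ℚ)) / (n s : ℚ)) := by
        rw [Finset.mul_sum, ← Finset.sum_neg_distrib, ← Finset.sum_add_distrib]
        exact Finset.sum_congr rfl fun s _ => by ring
      rw [hsum, e2pi_add, hε]
      congr 1
      have : e2pi ((x : ℚ) * ∑ s ∈ I, (m' s : ℚ) / (n s : ℚ)) = e2pi ((x : ℚ) * φ I) := by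
        apply e2pi_eq_of_sub_int
        refine ⟨x * ⌊∑ s ∈ I, (m' s : ℚ) / (n s : ℚ)⌋, ?_⟩
        rw [hφ]
        push_cast
        rw [← Int.self_sub_fract]
        ring
      rw [this, ← e2pi_pow]
    rw [h1, h2, hcdef]
    ring
  -- Claim B
  have claimB : ∀ (x : ℕ) (J : Finset (Fin k)), J.card < m →
      ∑ I ∈ univ.filter (fun I => J ⊆ I), ∏ s ∈ I, (- r x s) = 0 := by
    intro x J hJ
    obtain ⟨s₀, hs₀F, hs₀J⟩ : ∃ s₀, s₀ ∈ (univ.filter fun s => (n s : ℤ) ∣ (x : ℤ) - a s)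
        ∧ s₀ ∉ J := by
      have hcv := hcov (x : ℤ)
      by_contra hcon
      push_neg at hcon
      have hsub : (univ.filter fun s => (n s : ℤ) ∣ (x : ℤ) - a s) ⊆ J := hcon
      have := Finset.card_le_card hsub
      omega
    have hr0 : r x s₀ = 1 := by
      obtain ⟨t, ht⟩ := (Finset.mem_filter.mp hs₀F).2
      show e2pi ((m' s₀ : ℚ) * ((x : ℚ) - (a s₀ : ℚ)) / (n s₀ : ℚ)) = 1
      have hxq : ((x : ℚ) - (a s₀ : ℚ)) = (n s₀ : ℚ) * (t : ℚ) := by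
        exact_mod_cast congrArg (fun z : ℤ => (z : ℚ)) ht
      have harg : (m' s₀ : ℚ) * ((x : ℚ) - (a s₀ : ℚ)) / (n s₀ : ℚ)
          = ((m' s₀ * t : ℤ) : ℚ) := by
        rw [hxq]
        push_cast
        rw [mul_div_assoc, mul_comm (n s₀ : ℚ) (t : ℚ), mul_div_assoc,
          div_self (hnq s₀), mul_one]
      rw [harg, e2pi_int]
    have hbij : ∑ I ∈ univ.filter (fun I => J ⊆ I), ∏ s ∈ I, (- r x s)
        = ∑ K ∈ (univ \ J).powerset, ∏ s ∈ K ∪ J, (- r x s) := by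
      refine Finset.sum_nbij' (fun I => I \ J) (fun K => K ∪ J) ?_ ?_ ?_ ?_ ?_
      · intro I hI
        rw [Finset.mem_powerset]
        exact Finset.sdiff_subset_sdiff (Finset.subset_univ I) Finset.Subset.rfl
      · intro K hK
        rw [Finset.mem_filter]
        exact ⟨Finset.mem_univ _, Finset.subset_union_right⟩
      · intro I hI
        exact Finset.sdiff_union_of_subset (Finset.mem_filter.mp hI).2
      · intro K hK
        have hd : Disjoint K J := (Finset.subset_sdiff.mp (Finset.mem_powerset.mp hK)).2
        exact Finset.union_sdiff_cancel_right hd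
      · intro I hI
        rw [Finset.sdiff_union_of_subset (Finset.mem_filter.mp hI).2]
    rw [hbij]
    have hsplit : ∀ K ∈ (univ \ J).powerset,
        ∏ s ∈ K ∪ J, (- r x s) = (∏ s ∈ K, (- r x s)) * ∏ s ∈ J, (- r x s) := by
      intro K hK
      have hd : Disjoint K J := (Finset.subset_sdiff.mp (Finset.mem_powerset.mp hK)).2
      exact Finset.prod_union hd
    rw [Finset.sum_congr rfl hsplit, ← Finset.sum_mul]
    have hzero : ∑ K ∈ (univ \ J).powerset, ∏ s ∈ K, (- r x s) = 0 := by
      have hpa := Finset.prod_add (fun s => - r x s) (fun _ => (1 : ℂ)) (univ \ J)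
      simp only [Finset.prod_const_one, mul_one] at hpa
      rw [← hpa]
      refine Finset.prod_eq_zero (i := s₀) ?_ ?_
      · exact Finset.mem_sdiff.mpr ⟨Finset.mem_univ _, hs₀J⟩
      · rw [hr0]; ring
    rw [hzero, zero_mul]
  -- injectivity of e2pi on S
  have hinj : ∀ p ∈ S, ∀ q ∈ S, e2pi p = e2pi q → p = q := by
    intro p hp q hq hpq
    obtain ⟨Ip, _, hIp⟩ := Finset.mem_image.mp hp
    obtain ⟨Iq, _, hIq⟩ := Finset.mem_image.mp hq
    have hfp : Int.fract p = p := by rw [← hIp, hφ]; exact Int.fract_fract _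
    have hfq : Int.fract q = q := by rw [← hIq, hφ]; exact Int.fract_fract _
    rw [← hfp, ← hfq]
    exact e2pi_inj hpq
  -- Claim C
  have claimC : ∀ θ ∈ S, ∀ J : Finset (Fin k), J.card < m →
      ∑ I ∈ (univ.filter fun I => φ I = θ).filter (fun I => J ⊆ I), c I = 0 := by
    intro θ hθ J hJ
    have key := vand_zero e2pi hinj
      (fun θ => ∑ I ∈ (univ.filter (fun I => J ⊆ I)).filter (fun I => φ I = θ), c I) ?_ θ hθ
    · rw [← key, Finset.filter_comm]
    · intro x
      have step1 : ∀ θ' ∈ S,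
          (∑ I ∈ (univ.filter (fun I => J ⊆ I)).filter (fun I => φ I = θ'), c I) * e2pi θ' ^ x
          = ∑ I ∈ (univ.filter (fun I => J ⊆ I)).filter (fun I => φ I = θ'),
              c I * e2pi (φ I) ^ x := by
        intro θ' _
        rw [Finset.sum_mul]
        refine Finset.sum_congr rfl fun I hI => ?_
        rw [(Finset.mem_filter.mp hI).2]
      rw [Finset.sum_congr rfl step1]
      rw [Finset.sum_fiberwise_of_maps_to (fun I _ => Finset.mem_image_of_mem φ (Finset.mem_univ I))]
      rw [← Finset.sum_congr rfl (fun I _ => claimA x I)]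
      exact claimB x J hJ
  -- fiber bound
  have hfiber : ∀ θ ∈ S, 2 ^ m ≤ (univ.filter fun I => φ I = θ).card := by
    intro θ hθ
    refine comb_lemma m _ c (fun I _ => ?_) ?_ (claimC θ hθ)
    · exact mul_ne_zero (pow_ne_zero _ (by norm_num)) (e2pi_ne_zero _)
    · obtain ⟨I, _, hI⟩ := Finset.mem_image.mp hθ
      exact ⟨I, Finset.mem_filter.mpr ⟨Finset.mem_univ I, hI⟩⟩
  -- m ≤ k
  have hmk : m ≤ k := by
    have := (hcov 0).trans (Finset.card_filter_le _ _)
    simpa using this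
  -- final count
  have hcount : (univ : Finset (Finset (Fin k))).card
      = ∑ θ ∈ S, (univ.filter fun I => φ I = θ).card :=
    Finset.card_eq_sum_card_fiberwise (fun I _ => Finset.mem_image_of_mem φ (Finset.mem_univ I))
  have hle : S.card * 2 ^ m ≤ 2 ^ k := by
    calc S.card * 2 ^ m = ∑ _θ ∈ S, 2 ^ m := by rw [Finset.sum_const, smul_eq_mul]
      _ ≤ ∑ θ ∈ S, (univ.filter fun I => φ I = θ).card := Finset.sum_le_sum hfiber
      _ = (univ : Finset (Finset (Fin k))).card := hcount.symm
      _ = 2 ^ k := by simp [Finset.card_univ]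
  have h2 : (0:ℕ) < 2 ^ m := Nat.pow_pos (n := m) (by norm_num)
  refine Nat.le_of_mul_le_mul_right ?_ h2
  calc S.card * 2 ^ m ≤ 2 ^ k := hle
    _ = 2 ^ (k - m) * 2 ^ m := by rw [← pow_add, Nat.sub_add_cancel hmk]
end

section
/- Let A = {a_s + n_s ℤ}_{s=1}^k be an m-cover of ℤ, let m_1,...,m_k be integers, and define S(A) as the set of fractional parts of subset sums Σ_{s∈I} m_s/n_s. For any θ ∈ S(A), there exists t ∈ {1,...,k} such that both θ and the fractional part of θ − m_t/n_t lie in S(A_t), where A_t is the system A with the t-th progression removed. -/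
open Finset Complex

noncomputable def EE (q : ℚ) : ℂ := Complex.exp (2 * Real.pi * Complex.I * q)
lemma EE_zero : EE 0 = 1 := by simp [EE]
lemma EE_add (p q : ℚ) : EE (p + q) = EE p * EE q := by
  rw [EE, EE, EE, ← Complex.exp_add]; push_cast; ring_nf
lemma EE_ne_zero (q : ℚ) : EE q ≠ 0 := Complex.exp_ne_zero _
lemma EE_int (z : ℤ) : EE (z : ℚ) = 1 := by
  rw [EE]
  have h : (2 * (Real.pi:ℂ) * Complex.I * ((z : ℚ) : ℂ)) = (z : ℤ) * (2 * Real.pi * Complex.I) := by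
    push_cast; ring
  rw [h, Complex.exp_int_mul_two_pi_mul_I]
lemma EE_eq_one_iff (q : ℚ) : EE q = 1 ↔ ∃ z : ℤ, q = z := by
  constructor
  · intro h
    rw [EE, Complex.exp_eq_one_iff] at h
    obtain ⟨nn, hnn⟩ := h
    refine ⟨nn, ?_⟩
    have h2 : (2 * (Real.pi:ℂ) * Complex.I) ≠ 0 := by
      simp [Real.pi_ne_zero, Complex.I_ne_zero]
    have h3 : (2 * (Real.pi:ℂ) * Complex.I) * ((q:ℚ):ℂ) = (2 * (Real.pi:ℂ) * Complex.I) * (nn:ℂ) := by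
      rw [hnn]; ring
    have h4 : ((q:ℚ):ℂ) = (nn:ℂ) := mul_left_cancel₀ h2 h3
    exact_mod_cast h4
  · rintro ⟨z, rfl⟩; exact EE_int z
lemma EE_nat_mul (x : ℕ) (q : ℚ) : EE ((x : ℚ) * q) = EE q ^ x := by
  induction x with
  | zero => simp [EE_zero]
  | succ y ih =>
    have h : ((y+1 : ℕ) : ℚ) * q = (y:ℚ)*q + q := by push_cast; ring
    rw [h, EE_add, ih, pow_succ]
lemma EE_sum {α : Type*} (I : Finset α) (f : α → ℚ) : EE (∑ i ∈ I, f i) = ∏ i ∈ I, EE (f i) := by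
  induction I using Finset.cons_induction with
  | empty => simp [EE_zero]
  | cons a s ha ih => rw [Finset.sum_cons, Finset.prod_cons, EE_add, ih]

lemma key_lemma (k : ℕ) (a : Fin k → ℤ) (n : Fin k → ℕ) (hn : ∀ s, 0 < n s)
    (hcov : ∀ x : ℤ, ∃ s, (n s : ℤ) ∣ x - a s) (m' : Fin k → ℤ) (θ : ℚ)
    (hθ01 : Int.fract θ = θ)
    (I0 : Finset (Fin k)) (hI0 : Int.fract (∑ s ∈ I0, (m' s : ℚ) / (n s : ℚ)) = θ) :
    ∃ I1 : Finset (Fin k), I1 ≠ I0 ∧ Int.fract (∑ s ∈ I1, (m' s : ℚ) / (n s : ℚ)) = θ := by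
  classical
  set β : Finset (Fin k) → ℚ := fun I => ∑ s ∈ I, (m' s : ℚ) / (n s : ℚ) with hβ
  set b : Fin k → ℚ := fun s => (m' s : ℚ) / (n s : ℚ) with hb
  set c : Fin k → ℚ := fun s => -((m' s : ℚ) * (a s : ℚ)) / (n s : ℚ) with hc
  set N : ℕ := ∏ s, n s with hNdef
  have hn0 : ∀ s, (n s : ℚ) ≠ 0 := fun s => Nat.cast_ne_zero.mpr (hn s).ne'
  have hNpos : 0 < N := Finset.prod_pos (fun s _ => hn s)
  have hdvd : ∀ s, n s ∣ N := fun s => Finset.dvd_prod_of_mem n (mem_univ s)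
  -- N * b s is an integer
  have hNb : ∀ s : Fin k, ∃ z : ℤ, (N : ℚ) * b s = z := by
    intro s
    obtain ⟨d, hd⟩ := hdvd s
    refine ⟨(d : ℤ) * m' s, ?_⟩
    rw [hb]
    have h9 : (N : ℚ) = (n s : ℚ) * d := by exact_mod_cast hd
    rw [h9, ← mul_div_assoc, div_eq_iff (hn0 s)]
    push_cast
    ring
  have hNβ : ∀ I : Finset (Fin k), ∃ z : ℤ, (N : ℚ) * β I = z := by
    intro I
    have : (N : ℚ) * β I = ∑ s ∈ I, (N : ℚ) * b s := by
      rw [hβ, Finset.mul_sum]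
    choose z hz using hNb
    refine ⟨∑ s ∈ I, z s, ?_⟩
    rw [this]
    push_cast
    exact Finset.sum_congr rfl fun s _ => hz s
  have hNθ : ∃ z : ℤ, (N : ℚ) * θ = z := by
    obtain ⟨z, hz⟩ := hNβ I0
    refine ⟨z - N * ⌊β I0⌋, ?_⟩
    have : θ = β I0 - ⌊β I0⌋ := by rw [← hI0]; exact (Int.self_sub_floor (β I0)).symm
    rw [this]
    push_cast
    rw [mul_sub, hz]
  -- the product vanishes at every integer point
  have hzero : ∀ x : ℕ, ∏ s, (1 - EE (c s + (x : ℚ) * b s)) = 0 := by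
    intro x
    obtain ⟨s, d, hd⟩ := hcov (x : ℤ)
    apply Finset.prod_eq_zero (mem_univ s)
    have hx : ((x : ℤ) : ℚ) - (a s : ℚ) = (n s : ℚ) * (d : ℚ) := by exact_mod_cast congrArg (Int.cast : ℤ → ℚ) hd
    have hval : c s + (x : ℚ) * b s = ((m' s * d : ℤ) : ℚ) := by
      have hmul : (c s + (x : ℚ) * b s) * (n s : ℚ) = ((m' s * d : ℤ) : ℚ) * (n s : ℚ) := by
        rw [hc, hb, add_mul, div_mul_cancel₀ _ (hn0 s), mul_assoc, div_mul_cancel₀ _ (hn0 s)]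
        push_cast
        linear_combination (m' s : ℚ) * hx
      exact mul_right_cancel₀ (hn0 s) hmul
    rw [hval, EE_int, sub_self]
  -- the weights
  set w : Finset (Fin k) → ℂ := fun I => (-1) ^ I.card * EE (∑ s ∈ I, c s) with hw
  have hwne : ∀ I, w I ≠ 0 := by
    intro I
    exact mul_ne_zero (pow_ne_zero _ (by norm_num)) (EE_ne_zero _)
  -- expansion
  have hexpand : ∀ x : ℕ,
      EE (-(x : ℚ) * θ) * ∏ s, (1 - EE (c s + (x : ℚ) * b s))
        = ∑ I ∈ (univ : Finset (Fin k)).powerset, w I * (EE (β I - θ)) ^ x := by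
    intro x
    have h1 : ∀ s : Fin k, (1 : ℂ) - EE (c s + (x : ℚ) * b s) = -EE (c s + (x : ℚ) * b s) + 1 := by
      intro s; ring
    simp only [h1]
    rw [Finset.prod_add, Finset.mul_sum]
    refine Finset.sum_congr rfl fun I _ => ?_
    rw [Finset.prod_const_one, mul_one]
    have h2 : ∏ i ∈ I, (-EE (c i + (x : ℚ) * b i)) = (-1) ^ I.card * ∏ i ∈ I, EE (c i + (x : ℚ) * b i) := by
      rw [← Finset.prod_const, ← Finset.prod_mul_distrib]; simp
    rw [h2, ← EE_sum]
    have h3 : ∑ i ∈ I, (c i + (x : ℚ) * b i) = (∑ i ∈ I, c i) + (x : ℚ) * β I := by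
      rw [Finset.sum_add_distrib, Finset.mul_sum]
    rw [h3]
    have h4 : EE (-(x : ℚ) * θ) * EE ((∑ i ∈ I, c i) + (x : ℚ) * β I)
        = EE (∑ i ∈ I, c i) * EE ((x : ℚ) * (β I - θ)) := by
      rw [← EE_add, ← EE_add]
      congr 1
      ring
    rw [EE_nat_mul] at h4
    rw [hw]
    linear_combination ((-1 : ℂ)) ^ I.card * h4
  -- sum over a full period
  have hsum0 : ∑ I ∈ (univ : Finset (Fin k)).powerset, w I * (∑ x ∈ range N, (EE (β I - θ)) ^ x) = 0 := by
    have : ∑ I ∈ (univ : Finset (Fin k)).powerset, w I * (∑ x ∈ range N, (EE (β I - θ)) ^ x)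
        = ∑ x ∈ range N, ∑ I ∈ (univ : Finset (Fin k)).powerset, w I * (EE (β I - θ)) ^ x := by
      simp only [Finset.mul_sum]
      rw [Finset.sum_comm]
    rw [this]
    apply Finset.sum_eq_zero
    intro x _
    rw [← hexpand x, hzero x, mul_zero]
  -- evaluate inner geometric sums
  have hinner : ∀ I : Finset (Fin k),
      (∑ x ∈ range N, (EE (β I - θ)) ^ x) = if Int.fract (β I) = θ then (N : ℂ) else 0 := by
    intro I
    by_cases hIf : Int.fract (β I) = θ
    · have h5 : β I - θ = ((⌊β I⌋ : ℤ) : ℚ) := by rw [← hIf]; exact Int.self_sub_fract (β I)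
      rw [h5, EE_int, if_pos hIf]
      simp
    · have hz1 : EE (β I - θ) ≠ 1 := by
        intro h
        rw [EE_eq_one_iff] at h
        obtain ⟨z, hz⟩ := h
        apply hIf
        have : β I = θ + (z : ℚ) := by linarith
        rw [this, Int.fract_add_intCast, hθ01]
      have hzN : EE (β I - θ) ^ N = 1 := by
        rw [← EE_nat_mul]
        obtain ⟨zb, hzb⟩ := hNβ I
        obtain ⟨zθ, hzθ⟩ := hNθ
        have : (N : ℚ) * (β I - θ) = ((zb - zθ : ℤ) : ℚ) := by
          push_cast
          rw [mul_sub, hzb, hzθ]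
        rw [this, EE_int]
      rw [if_neg hIf, geom_sum_eq hz1, hzN, sub_self, zero_div]
  -- restrict to the fiber
  have hfiber : ∑ I ∈ ((univ : Finset (Fin k)).powerset).filter (fun I => Int.fract (β I) = θ), w I = 0 := by
    have h6 : ∑ I ∈ ((univ : Finset (Fin k)).powerset).filter (fun I => Int.fract (β I) = θ), w I * (N : ℂ) = 0 := by
      rw [Finset.sum_filter]
      have h7 : ∀ I ∈ (univ : Finset (Fin k)).powerset,
          (if Int.fract (β I) = θ then w I * (N : ℂ) else 0) = w I * ∑ x ∈ range N, EE (β I - θ) ^ x := by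
        intro I _
        rw [hinner I]
        by_cases hIf : Int.fract (β I) = θ
        · rw [if_pos hIf, if_pos hIf]
        · rw [if_neg hIf, if_neg hIf, mul_zero]
      rw [Finset.sum_congr rfl h7, hsum0]
    rw [← Finset.sum_mul] at h6
    rcases mul_eq_zero.mp h6 with h | h
    · exact h
    · exfalso
      have : (N : ℂ) ≠ 0 := Nat.cast_ne_zero.mpr hNpos.ne'
      exact this h
  -- conclude
  by_contra hcon
  push_neg at hcon
  have hJ : ((univ : Finset (Fin k)).powerset).filter (fun I => Int.fract (β I) = θ) = {I0} := by
    apply Finset.eq_singleton_iff_unique_mem.mpr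
    constructor
    · rw [Finset.mem_filter]
      exact ⟨Finset.mem_powerset.mpr (Finset.subset_univ _), hI0⟩
    · intro I hI
      rw [Finset.mem_filter] at hI
      by_contra hne
      exact hcon I hne hI.2
  rw [hJ, Finset.sum_singleton] at hfiber
  exact hwne I0 hfiber

/-- If `{a s + n s ℤ}` is an `m`-cover of `ℤ` and `θ ∈ S(A)`, then there is `t` such that
both `θ` and the fractional part of `θ - m' t / n t` lie in `S(A_t)`, where `A_t` drops the
`t`-th progression. -/
theorem stmt2 (k m : ℕ) (hm : 1 ≤ m) (a : Fin k → ℤ) (n : Fin k → ℕ) (hn : ∀ s, 0 < n s)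
    (hcov : ∀ x : ℤ, m ≤ (univ.filter fun s => (n s : ℤ) ∣ x - a s).card)
    (m' : Fin k → ℤ) (θ : ℚ)
    (hθ : θ ∈ (univ : Finset (Finset (Fin k))).image fun I =>
        Int.fract (∑ s ∈ I, (m' s : ℚ) / (n s : ℚ))) :
    ∃ t : Fin k,
      θ ∈ ((univ.erase t).powerset).image
          (fun I => Int.fract (∑ s ∈ I, (m' s : ℚ) / (n s : ℚ))) ∧
      Int.fract (θ - (m' t : ℚ) / (n t : ℚ)) ∈ ((univ.erase t).powerset).image
          (fun I => Int.fract (∑ s ∈ I, (m' s : ℚ) / (n s : ℚ))) := by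
  classical
  obtain ⟨I0, -, hI0⟩ := Finset.mem_image.mp hθ
  have hθ01 : Int.fract θ = θ := by rw [← hI0, Int.fract_fract]
  have hcov' : ∀ x : ℤ, ∃ s, (n s : ℤ) ∣ x - a s := by
    intro x
    have h1 := hcov x
    have h2 : 0 < (univ.filter fun s => (n s : ℤ) ∣ x - a s).card :=
      lt_of_lt_of_le Nat.zero_lt_one (le_trans hm h1)
    obtain ⟨s, hs⟩ := Finset.card_pos.mp h2
    exact ⟨s, (Finset.mem_filter.mp hs).2⟩
  obtain ⟨I1, hne, hI1⟩ := key_lemma k a n hn hcov' m' θ hθ01 I0 hI0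
  obtain ⟨t, ht⟩ : ∃ t, (t ∈ I0 ∧ t ∉ I1) ∨ (t ∈ I1 ∧ t ∉ I0) := by
    by_contra h
    push_neg at h
    apply hne
    ext u
    have := h u
    tauto
  obtain ⟨Iin, Iout, htin, htout, hIin, hIout⟩ :
      ∃ Iin Iout : Finset (Fin k), t ∈ Iin ∧ t ∉ Iout ∧
        Int.fract (∑ s ∈ Iin, (m' s : ℚ) / (n s : ℚ)) = θ ∧
        Int.fract (∑ s ∈ Iout, (m' s : ℚ) / (n s : ℚ)) = θ := by
    rcases ht with ⟨h1, h2⟩ | ⟨h1, h2⟩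
    · exact ⟨I0, I1, h1, h2, hI0, hI1⟩
    · exact ⟨I1, I0, h1, h2, hI1, hI0⟩
  refine ⟨t, ?_, ?_⟩
  · exact Finset.mem_image.mpr
      ⟨Iout, Finset.mem_powerset.mpr (Finset.subset_erase.mpr ⟨Finset.subset_univ _, htout⟩), hIout⟩
  · apply Finset.mem_image.mpr
    refine ⟨Iin.erase t, Finset.mem_powerset.mpr (Finset.erase_subset_erase t (Finset.subset_univ _)), ?_⟩
    rw [Finset.sum_erase_eq_sub htin]
    symm
    apply (Int.fract_eq_fract).mpr
    refine ⟨-⌊∑ s ∈ Iin, (m' s : ℚ) / (n s : ℚ)⌋, ?_⟩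
    have h5 : (∑ s ∈ Iin, (m' s : ℚ) / (n s : ℚ)) - θ
        = (⌊∑ s ∈ Iin, (m' s : ℚ) / (n s : ℚ)⌋ : ℚ) := by
      rw [← hIin]; exact Int.self_sub_fract _
    push_cast
    linarith [h5]
end

section
/- If A = {a_s + n_s ℤ}_{s=1}^k is a cover of ℤ (every integer lies in at least one progression), then there exists a nonempty subset I ⊆ {1,...,k} such that Σ_{s∈I} 1/n_s is a positive integer. -/
open Finset

/-- If `{a s + n s ℤ}` covers `ℤ`, then some nonempty subset `I` has `∑_{s∈I} 1/(n s)`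
a positive integer. -/
theorem stmt3 (k : ℕ) (a : Fin k → ℤ) (n : Fin k → ℕ) (hn : ∀ s, 0 < n s)
    (hcov : ∀ x : ℤ, ∃ s, (n s : ℤ) ∣ x - a s) :
    ∃ I : Finset (Fin k), I.Nonempty ∧ ∃ z : ℤ, 0 < z ∧
      ∑ s ∈ I, (1 : ℚ) / (n s : ℚ) = (z : ℚ) := by
  by_contra hgoal
  push_neg at hgoal
  set N : ℕ := ∏ s, n s with hNdef
  have hN : 0 < N := Finset.prod_pos (fun s _ => hn s)
  have hdvd : ∀ s, n s ∣ N := fun s => Finset.dvd_prod_of_mem n (mem_univ s)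
  have hno : ∀ I : Finset (Fin k), I.Nonempty → ¬ (N ∣ ∑ s ∈ I, N / n s) := by
    intro I hI hdvdI
    obtain ⟨m, hm⟩ := hdvdI
    have hwpos : 0 < ∑ s ∈ I, N / n s :=
      Finset.sum_pos (fun s _ => Nat.div_pos (Nat.le_of_dvd hN (hdvd s)) (hn s)) hI
    have hmpos : 0 < m := by
      have h2 : 0 < N * m := hm ▸ hwpos
      exact Nat.pos_of_ne_zero (fun h => by simp [h] at h2)
    refine hgoal I hI (m : ℤ) (by exact_mod_cast hmpos) ?_
    have key : ∀ s ∈ I, (1 : ℚ) / (n s : ℚ) = ((N / n s : ℕ) : ℚ) / (N : ℚ) := by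
      intro s _
      have h1 : ((N / n s : ℕ) : ℚ) * (n s : ℚ) = (N : ℚ) := by
        exact_mod_cast Nat.div_mul_cancel (hdvd s)
      have hns : (n s : ℚ) ≠ 0 := by exact_mod_cast (hn s).ne'
      have hNne : (N : ℚ) ≠ 0 := by exact_mod_cast hN.ne'
      field_simp
      linarith [h1]
    rw [Finset.sum_congr rfl key, ← Finset.sum_div]
    rw [show ((m : ℤ) : ℚ) = (m : ℚ) by push_cast; ring]
    rw [div_eq_iff (by exact_mod_cast hN.ne' : (N : ℚ) ≠ 0)]
    rw [← Nat.cast_sum]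
    rw [hm]
    push_cast
    ring
  -- main argument: roots of unity
  classical
  set ζ : ℂ := Complex.exp (2 * Real.pi * Complex.I / N) with hζdef
  have hprim : IsPrimitiveRoot ζ N := Complex.isPrimitiveRoot_exp N hN.ne'
  have hζN : ζ ^ N = 1 := hprim.pow_eq_one
  have hζne : ζ ≠ 0 := by
    intro h
    have := hζN
    rw [h] at this
    simp [zero_pow hN.ne'] at this
  have hzpowN : ∀ c : ℤ, ζ ^ (c * (N : ℤ)) = 1 := by
    intro c
    rw [mul_comm, zpow_mul, zpow_natCast, hζN, one_zpow]
  set d : Fin k → ℤ := fun s => ((N / n s : ℕ) : ℤ) with hd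
  set w : Finset (Fin k) → ℕ := fun I => ∑ s ∈ I, N / n s with hw
  set A : Finset (Fin k) → ℤ := fun I => ∑ s ∈ I, a s * d s with hA
  have hprodz : ∀ (g : Fin k → ℤ) (I : Finset (Fin k)),
      ∏ s ∈ I, ζ ^ (g s) = ζ ^ (∑ s ∈ I, g s) := by
    intro g I
    induction I using Finset.induction with
    | empty => simp
    | insert _ _ h ih => rw [prod_insert h, sum_insert h, zpow_add₀ hζne, ih]
  have hzero : ∀ t : ℕ, ∏ s : Fin k, (1 - ζ ^ (((t : ℤ) - a s) * d s)) = 0 := by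
    intro t
    obtain ⟨s, c, hc⟩ := hcov t
    apply Finset.prod_eq_zero (mem_univ s)
    have hnsd : (n s : ℤ) * d s = (N : ℤ) := by
      simp only [hd]
      exact_mod_cast Nat.mul_div_cancel' (hdvd s)
    have : ((t : ℤ) - a s) * d s = c * (N : ℤ) := by
      rw [hc, mul_comm ((n s : ℤ)) c, mul_assoc, hnsd]
    rw [this, hzpowN, sub_self]
  have hexp : ∀ t : ℕ, ∏ s : Fin k, (1 - ζ ^ (((t : ℤ) - a s) * d s)) =
      ∑ I ∈ (univ : Finset (Fin k)).powerset,
        (-1 : ℂ) ^ I.card * ζ ^ ((t : ℤ) * (w I : ℤ) - A I) := by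
    intro t
    have h1 : ∀ s : Fin k, (1 : ℂ) - ζ ^ (((t : ℤ) - a s) * d s) =
        (fun s => -ζ ^ (((t : ℤ) - a s) * d s)) s + (fun _ => (1:ℂ)) s := by
      intro s; ring
    rw [Finset.prod_congr rfl (fun s _ => h1 s), Finset.prod_add]
    refine Finset.sum_congr rfl (fun I _ => ?_)
    rw [Finset.prod_const_one, mul_one]
    have : ∏ s ∈ I, -ζ ^ (((t : ℤ) - a s) * d s) =
        (-1 : ℂ) ^ I.card * ∏ s ∈ I, ζ ^ (((t : ℤ) - a s) * d s) := by
      rw [← Finset.prod_const (-1 : ℂ), ← Finset.prod_mul_distrib]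
      exact Finset.prod_congr rfl (fun s _ => by ring)
    rw [this, hprodz]
    congr 2
    have hwcast : (w I : ℤ) = ∑ s ∈ I, d s := by
      simp only [hw, hd]; push_cast; rfl
    rw [hwcast, hA, Finset.mul_sum, ← Finset.sum_sub_distrib]
    exact Finset.sum_congr rfl (fun s _ => by ring)
  have hgeom : ∀ I : Finset (Fin k), ∑ t ∈ Finset.range N, (ζ ^ (w I)) ^ t =
      (if N ∣ w I then (N : ℂ) else 0) := by
    intro I
    by_cases h : N ∣ w I
    · obtain ⟨c, hc⟩ := h
      rw [if_pos ⟨c, hc⟩, hc, pow_mul, hζN, one_pow]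
      simp
    · rw [if_neg h]
      have hne1 : ζ ^ (w I) ≠ 1 := fun h1 => h ((hprim.pow_eq_one_iff_dvd _).mp h1)
      rw [geom_sum_eq hne1, ← pow_mul, mul_comm, pow_mul, hζN, one_pow, sub_self,
        zero_div]
  have main : (0 : ℂ) = ∑ I ∈ (univ : Finset (Fin k)).powerset,
      (-1 : ℂ) ^ I.card * ζ ^ (-(A I)) * (if N ∣ w I then (N : ℂ) else 0) := by
    calc (0 : ℂ) = ∑ t ∈ Finset.range N, ∏ s : Fin k,
          (1 - ζ ^ (((t : ℤ) - a s) * d s)) := by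
          rw [Finset.sum_congr rfl (fun t _ => hzero t), Finset.sum_const, smul_zero]
      _ = ∑ t ∈ Finset.range N, ∑ I ∈ (univ : Finset (Fin k)).powerset,
          (-1 : ℂ) ^ I.card * ζ ^ ((t : ℤ) * (w I : ℤ) - A I) :=
          Finset.sum_congr rfl (fun t _ => hexp t)
      _ = ∑ I ∈ (univ : Finset (Fin k)).powerset, ∑ t ∈ Finset.range N,
          (-1 : ℂ) ^ I.card * ζ ^ ((t : ℤ) * (w I : ℤ) - A I) := Finset.sum_comm
      _ = ∑ I ∈ (univ : Finset (Fin k)).powerset,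
          (-1 : ℂ) ^ I.card * ζ ^ (-(A I)) * ∑ t ∈ Finset.range N, (ζ ^ (w I)) ^ t := by
          refine Finset.sum_congr rfl (fun I _ => ?_)
          rw [Finset.mul_sum]
          refine Finset.sum_congr rfl (fun t _ => ?_)
          rw [mul_assoc]
          congr 1
          have h2 : (ζ ^ (w I)) ^ t = ζ ^ ((t : ℤ) * (w I : ℤ)) := by
            rw [mul_comm, zpow_mul, zpow_natCast, zpow_natCast]
          rw [h2, ← zpow_add₀ hζne]
          congr 1
          ring
      _ = ∑ I ∈ (univ : Finset (Fin k)).powerset,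
          (-1 : ℂ) ^ I.card * ζ ^ (-(A I)) * (if N ∣ w I then (N : ℂ) else 0) :=
          Finset.sum_congr rfl (fun I _ => by rw [hgeom I])
  have hfinal : (0 : ℂ) = (N : ℂ) := by
    rw [main, Finset.sum_eq_single (∅ : Finset (Fin k))]
    · simp [hw, hA]
    · intro I _ hIne
      have : ¬ N ∣ w I := hno I (Finset.nonempty_of_ne_empty hIne)
      rw [if_neg this, mul_zero]
    · intro h
      exact absurd (Finset.mem_powerset.mpr (Finset.empty_subset _)) h
  have : (N : ℂ) ≠ 0 := Nat.cast_ne_zero.mpr hN.ne'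
  exact this hfinal.symm
end

section
/- Let A = {a_s + n_s ℤ}_{s=1}^k be a cover of ℤ and let m_1, ..., m_k be positive integers. Then for any subset J ⊆ {1,...,k} there exists a subset I ⊆ {1,...,k} with I ≠ J such that the fractional part of Σ_{s∈I} m_s/n_s equals the fractional part of Σ_{s∈J} m_s/n_s. -/
open Finset

/-- If `{a s + n s ℤ}` covers `ℤ` and `m' s` are positive integers, then for any subset `J`
there is a different subset `I` with the same fractional part of the weighted sum. -/
theorem stmt4 (k : ℕ) (a : Fin k → ℤ) (n : Fin k → ℕ) (hn : ∀ s, 0 < n s)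
    (hcov : ∀ x : ℤ, ∃ s, (n s : ℤ) ∣ x - a s)
    (m' : Fin k → ℕ) (hm' : ∀ s, 0 < m' s) (J : Finset (Fin k)) :
    ∃ I : Finset (Fin k), I ≠ J ∧
      Int.fract (∑ s ∈ I, (m' s : ℚ) / (n s : ℚ)) =
        Int.fract (∑ s ∈ J, (m' s : ℚ) / (n s : ℚ)) := by
  classical
  set N : ℕ := ∏ s, n s with hNdef
  have hNpos : 0 < N := prod_pos fun s _ => hn s
  have hNne : (N : ℚ) ≠ 0 := Nat.cast_ne_zero.mpr hNpos.ne'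
  have hdvdN : ∀ s, n s ∣ N := fun s => dvd_prod_of_mem n (mem_univ s)
  set w : Fin k → ℕ := fun s => m' s * (N / n s) with hwdef
  set W : Finset (Fin k) → ℤ := fun I => ∑ s ∈ I, (w s : ℤ) with hWdef
  -- the weighted sum over `I` equals `W I / N`
  have hsum : ∀ I : Finset (Fin k),
      ∑ s ∈ I, (m' s : ℚ) / (n s : ℚ) = (W I : ℚ) / N := by
    intro I
    have : ∀ s, (m' s : ℚ) / (n s : ℚ) = (w s : ℚ) / N := by
      intro s
      have h1 : (n s : ℚ) ≠ 0 := Nat.cast_ne_zero.mpr (hn s).ne'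
      have h2 : ((N / n s : ℕ) : ℚ) = (N : ℚ) / n s := Nat.cast_div (hdvdN s) h1
      rw [hwdef]
      push_cast [h2]
      field_simp
    simp only [this, hWdef]
    push_cast
    rw [Finset.sum_div]
  -- it suffices to find `I ≠ J` with `N ∣ W I - W J`
  suffices h : ∃ I : Finset (Fin k), I ≠ J ∧ (N : ℤ) ∣ W I - W J by
    obtain ⟨I, hIJ, d, hd⟩ := h
    refine ⟨I, hIJ, ?_⟩
    rw [hsum I, hsum J, Int.fract_eq_fract]
    refine ⟨d, ?_⟩
    rw [div_sub_div_same]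
    rw [show ((W I : ℚ) - W J) = ((W I - W J : ℤ) : ℚ) by push_cast; ring, hd]
    push_cast
    field_simp
  by_contra hcon
  push_neg at hcon
  -- roots of unity setup
  set ζ : ℂ := Complex.exp (2 * Real.pi * Complex.I / N) with hζdef
  have hprim : IsPrimitiveRoot ζ N := Complex.isPrimitiveRoot_exp N hNpos.ne'
  have hz : ζ ≠ 0 := fun h => by
    have := hprim.pow_eq_one
    rw [h, zero_pow hNpos.ne'] at this
    exact zero_ne_one this
  have hzsum : ∀ (I : Finset (Fin k)) (e : Fin k → ℤ),
      ∏ s ∈ I, ζ ^ e s = ζ ^ (∑ s ∈ I, e s) := by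
    intro I e
    induction I using Finset.induction with
    | empty => simp
    | insert x s hx ih => rw [Finset.prod_insert hx, Finset.sum_insert hx, zpow_add₀ hz, ih]
  -- geometric sum
  have hgeom : ∀ d : ℤ, ∑ j ∈ range N, (ζ ^ d) ^ j =
      if (N : ℤ) ∣ d then (N : ℂ) else 0 := by
    intro d
    by_cases hdd : (N : ℤ) ∣ d
    · rw [if_pos hdd, (hprim.zpow_eq_one_iff_dvd d).mpr hdd]
      simp
    · rw [if_neg hdd]
      have hx : ζ ^ d ≠ 1 := fun h => hdd ((hprim.zpow_eq_one_iff_dvd d).mp h)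
      rw [geom_sum_eq hx]
      have : (ζ ^ d) ^ N = 1 := by
        rw [← zpow_natCast (ζ ^ d) N, ← zpow_mul, mul_comm, zpow_mul, zpow_natCast,
          hprim.pow_eq_one, one_zpow]
      rw [this]
      simp
  set c : ℤ := W J with hcdef
  set E : Fin k → ℕ → ℤ := fun s j => ((j : ℤ) - a s) * w s with hEdef
  set A : Finset (Fin k) → ℤ := fun I => ∑ s ∈ I, a s * w s with hAdef
  set S : ℂ := ∑ j ∈ range N, ζ ^ (-(j : ℤ) * c) * ∏ s, (1 - ζ ^ E s j) with hSdef
  -- Step A : S = 0 since every j is covered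
  have hS0 : S = 0 := by
    rw [hSdef]
    refine Finset.sum_eq_zero fun j _ => ?_
    obtain ⟨s, t, ht⟩ := hcov (j : ℤ)
    have hNs : (n s : ℤ) * ((N / n s : ℕ) : ℤ) = (N : ℤ) := by
      exact_mod_cast congrArg (Nat.cast : ℕ → ℤ) (Nat.mul_div_cancel' (hdvdN s))
    have hw' : (w s : ℤ) = (m' s : ℤ) * ((N / n s : ℕ) : ℤ) := by
      rw [hwdef]; push_cast; ring
    have hdvdE : (N : ℤ) ∣ E s j := by
      refine ⟨t * m' s, ?_⟩
      show ((j : ℤ) - a s) * (w s : ℤ) = (N : ℤ) * (t * m' s)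
      rw [ht, hw']
      linear_combination t * (m' s : ℤ) * hNs
    have : (1 : ℂ) - ζ ^ E s j = 0 := by
      rw [(hprim.zpow_eq_one_iff_dvd (E s j)).mpr hdvdE, sub_self]
    rw [Finset.prod_eq_zero (mem_univ s) this, mul_zero]
  -- Step B : expand S
  have hexp : ∀ j ∈ range N, ζ ^ (-(j : ℤ) * c) * ∏ s, (1 - ζ ^ E s j) =
      ∑ I ∈ (univ : Finset (Fin k)).powerset,
        (-1) ^ I.card * ζ ^ (-(A I)) * (ζ ^ (W I - c)) ^ j := by
    intro j _
    have h1 : ∀ s : Fin k, (1 : ℂ) - ζ ^ E s j = (-(ζ ^ E s j)) + 1 := fun s => by ring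
    calc ζ ^ (-(j : ℤ) * c) * ∏ s, (1 - ζ ^ E s j)
        = ζ ^ (-(j : ℤ) * c) * ∑ I ∈ (univ : Finset (Fin k)).powerset,
            (∏ s ∈ I, -(ζ ^ E s j)) * ∏ s ∈ univ \ I, (1 : ℂ) := by
          rw [← Finset.prod_add]
          simp only [h1]
      _ = ∑ I ∈ (univ : Finset (Fin k)).powerset,
            (-1) ^ I.card * ζ ^ (-(A I)) * (ζ ^ (W I - c)) ^ j := by
          rw [Finset.mul_sum]
          refine Finset.sum_congr rfl fun I _ => ?_
          have h2 : ∏ s ∈ I, -(ζ ^ E s j) = (-1) ^ I.card * ζ ^ (∑ s ∈ I, E s j) := by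
            have : ∀ s ∈ I, -(ζ ^ E s j) = (-1) * ζ ^ E s j := fun s _ => by ring
            rw [Finset.prod_congr rfl this, Finset.prod_mul_distrib, Finset.prod_const,
              hzsum]
          have h3 : ∑ s ∈ I, E s j = (j : ℤ) * W I - A I := by
            simp only [hEdef, hWdef, hAdef, sub_mul, Finset.sum_sub_distrib,
              ← Finset.mul_sum]
          have h4 : (ζ ^ (W I - c)) ^ j = ζ ^ ((W I - c) * (j : ℤ)) := by
            rw [zpow_mul, zpow_natCast]
          have h5 : ζ ^ (-(j : ℤ) * c) * ζ ^ ((j : ℤ) * W I - A I)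
              = ζ ^ (-A I) * ζ ^ ((W I - c) * (j : ℤ)) := by
            rw [← zpow_add₀ hz, ← zpow_add₀ hz]
            congr 1
            ring
          rw [h2, h3, Finset.prod_const_one, mul_one, h4]
          linear_combination ((-1 : ℂ)) ^ I.card * h5
  have hSval : S = (-1) ^ J.card * ζ ^ (-(A J)) * N := by
    rw [hSdef, Finset.sum_congr rfl hexp, Finset.sum_comm]
    have : ∀ I ∈ (univ : Finset (Fin k)).powerset,
        ∑ j ∈ range N, (-1) ^ I.card * ζ ^ (-(A I)) * (ζ ^ (W I - c)) ^ j
          = (-1) ^ I.card * ζ ^ (-(A I)) * (if (N : ℤ) ∣ W I - c then (N : ℂ) else 0) := by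
      intro I _
      rw [← Finset.mul_sum, hgeom]
    rw [Finset.sum_congr rfl this]
    rw [Finset.sum_eq_single_of_mem J (mem_powerset.mpr (subset_univ J))]
    · rw [hcdef, sub_self, if_pos (dvd_zero _)]
    · intro I _ hIJ
      rw [if_neg (hcon I hIJ), mul_zero]
  rw [hS0] at hSval
  have : ((-1 : ℂ)) ^ J.card * ζ ^ (-(A J)) * N ≠ 0 := by
    apply mul_ne_zero (mul_ne_zero _ _)
    · exact Nat.cast_ne_zero.mpr hNpos.ne'
    · exact pow_ne_zero _ (neg_ne_zero.mpr one_ne_zero)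
    · exact zpow_ne_zero _ hz
  exact this hSval.symm
end

section
/- Let A = {a_s + n_s ℤ}_{s=1}^k be an m-cover of ℤ and let m_1,...,m_k be positive integers. Then for any J ⊆ {1,...,k}, the number of subsets I ⊆ {1,...,k} with I ≠ J such that the fractional parts of Σ_{s∈I} m_s/n_s and Σ_{s∈J} m_s/n_s coincide is at least m. -/
open Finset

/-- Core lemma (the `m = 1` analytic heart, via roots of unity): if every integer is covered
by at least one progression indexed by `T`, then any `J ⊆ T` has a companion subset `I ≠ J`
with the same fractional part of the weighted subset sum. -/
lemma coreZ {k : ℕ} (a : Fin k → ℤ) (n : Fin k → ℕ) (m' : Fin k → ℕ) (hn : ∀ s, 0 < n s)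
    (T : Finset (Fin k)) (hcov : ∀ x : ℤ, ∃ s ∈ T, (n s : ℤ) ∣ x - a s)
    (J : Finset (Fin k)) (hJ : J ⊆ T) :
    ∃ I, I ⊆ T ∧ I ≠ J ∧
      Int.fract (∑ s ∈ I, (m' s : ℚ) / (n s : ℚ)) =
        Int.fract (∑ s ∈ J, (m' s : ℚ) / (n s : ℚ)) := by
  by_contra hcon
  push_neg at hcon
  -- notation
  set N : ℕ := ∏ s ∈ T, n s with hNdef
  have hNpos : 0 < N := Finset.prod_pos fun s _ => hn s
  have hdvdN : ∀ s ∈ T, n s ∣ N := fun s hs => Finset.dvd_prod_of_mem _ hs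
  set d : Fin k → ℤ := fun s => (m' s : ℤ) * ((N / n s : ℕ) : ℤ) with hddef
  have hnd : ∀ s ∈ T, (n s : ℤ) * ((N / n s : ℕ) : ℤ) = (N : ℤ) := by
    intro s hs
    exact_mod_cast congrArg (Nat.cast : ℕ → ℤ) (Nat.mul_div_cancel' (hdvdN s hs))
  set D : Finset (Fin k) → ℤ := fun I => ∑ s ∈ I, d s with hDdef
  set A : Finset (Fin k) → ℤ := fun I => ∑ s ∈ I, d s * a s with hAdef
  set R : Finset (Fin k) → ℚ := fun I => ∑ s ∈ I, (m' s : ℚ) / (n s : ℚ) with hRdef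
  -- rational bridge
  have hRD : ∀ I, I ⊆ T → R I = (D I : ℚ) / (N : ℚ) := by
    intro I hIT
    have : ∀ s ∈ I, (m' s : ℚ) / (n s : ℚ) = (d s : ℚ) / (N : ℚ) := by
      intro s hs
      have h1 : (n s : ℚ) ≠ 0 := by exact_mod_cast (hn s).ne'
      have hN : ((n s : ℤ) : ℚ) * (((N / n s : ℕ) : ℤ) : ℚ) = ((N : ℤ) : ℚ) := by
        exact_mod_cast congrArg (Int.cast : ℤ → ℚ) (hnd s (hIT hs))
      have hq : (((N / n s : ℕ) : ℤ) : ℚ) ≠ 0 := by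
        intro h0
        rw [h0, mul_zero] at hN
        exact (by exact_mod_cast hNpos.ne' : ((N:ℤ):ℚ) ≠ 0) hN.symm
      rw [hddef]
      push_cast
      rw [div_eq_div_iff h1 (by exact_mod_cast hNpos.ne' : ((N:ℕ):ℚ) ≠ 0)]
      push_cast at hN ⊢
      nlinarith [hN]
    rw [hRdef, hDdef]
    simp only
    rw [Finset.sum_congr rfl this, ← Finset.sum_div]
    push_cast
    rfl
  have hfr_iff : ∀ I, I ⊆ T → (Int.fract (R I) = Int.fract (R J) ↔ (N : ℤ) ∣ D I - D J) := by
    intro I hIT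
    rw [Int.fract_eq_fract, hRD I hIT, hRD J hJ]
    constructor
    · rintro ⟨z, hz⟩
      refine ⟨z, ?_⟩
      rw [mul_comm]
      have hNQ : ((N : ℤ) : ℚ) ≠ 0 := by exact_mod_cast hNpos.ne'
      have : ((D I - D J : ℤ) : ℚ) = ((z * N : ℤ) : ℚ) := by
        push_cast
        rw [div_sub_div_same] at hz
        field_simp at hz
        push_cast at hz
        linarith
      exact_mod_cast this
    · rintro ⟨z, hz⟩
      refine ⟨z, ?_⟩
      rw [div_sub_div_same, ← Int.cast_sub, hz]
      push_cast
      rw [mul_comm ((N:ℕ):ℚ) (z:ℚ), mul_div_assoc,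
        div_self (by exact_mod_cast hNpos.ne' : ((N:ℕ):ℚ) ≠ 0), mul_one]
  -- the class is a singleton {J}
  have hsingle : T.powerset.filter (fun I => (N : ℤ) ∣ D I - D J) = {J} := by
    apply Finset.eq_singleton_iff_unique_mem.mpr
    constructor
    · exact Finset.mem_filter.mpr ⟨Finset.mem_powerset.mpr hJ, by simp⟩
    · intro I hI
      rcases Finset.mem_filter.mp hI with ⟨hIp, hdvd⟩
      have hIT := Finset.mem_powerset.mp hIp
      by_contra hne
      exact hcon I hIT hne ((hfr_iff I hIT).mpr hdvd)
  -- roots of unity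
  set ζ : ℂ := Complex.exp (2 * Real.pi * Complex.I / N) with hζdef
  have hprim : IsPrimitiveRoot ζ N := Complex.isPrimitiveRoot_exp N hNpos.ne'
  have hζ0 : ζ ≠ 0 := Complex.exp_ne_zero _
  set e : ℤ → ℂ := fun t => ζ ^ t with hedef
  have he1 : ∀ t : ℤ, (N : ℤ) ∣ t → e t = 1 := fun t ht => (hprim.zpow_eq_one_iff_dvd t).mpr ht
  have headd : ∀ t u : ℤ, e (t + u) = e t * e u := fun t u => zpow_add₀ hζ0 t u
  have hprod_e : ∀ (t : Finset (Fin k)) (f : Fin k → ℤ),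
      (∏ s ∈ t, e (f s)) = e (∑ s ∈ t, f s) := by
    intro t f
    induction t using Finset.induction_on with
    | empty => simp [hedef]
    | @insert s t hs ih => rw [Finset.prod_insert hs, Finset.sum_insert hs, ih, ← headd]
  have horth : ∀ c : ℤ,
      (∑ x ∈ Finset.range N, e (c * (x : ℤ))) = if (N : ℤ) ∣ c then (N : ℂ) else 0 := by
    intro c
    have hterm : ∀ x : ℕ, e (c * (x : ℤ)) = (ζ ^ c) ^ x := by
      intro x
      rw [hedef]; simp only
      rw [zpow_mul, zpow_natCast]
    rw [Finset.sum_congr rfl fun x _ => hterm x]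
    split_ifs with h
    · have h1 : ζ ^ c = 1 := (hprim.zpow_eq_one_iff_dvd c).mpr h
      simp [h1]
    · have hne : ζ ^ c ≠ 1 := fun h' => h ((hprim.zpow_eq_one_iff_dvd c).mp h')
      rw [geom_sum_eq hne]
      have h2 : (ζ ^ c) ^ N = 1 := by
        rw [← zpow_natCast (ζ ^ c) N, ← zpow_mul, mul_comm, zpow_mul, zpow_natCast,
          hprim.pow_eq_one, one_zpow]
      rw [h2, sub_self, zero_div]
  -- the product vanishes at every integer
  have hzero : ∀ x : ℤ, (∏ s ∈ T, (1 - e (d s * (x - a s)))) = 0 := by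
    intro x
    obtain ⟨s, hsT, t, ht⟩ := hcov x
    refine Finset.prod_eq_zero hsT ?_
    have h1 : e (d s * (x - a s)) = 1 := by
      refine he1 _ ⟨(m' s : ℤ) * t, ?_⟩
      rw [hddef]; simp only
      rw [ht, show (m' s : ℤ) * ((N / n s : ℕ) : ℤ) * ((n s : ℤ) * t)
          = (((n s : ℤ) * ((N / n s : ℕ) : ℤ)) * ((m' s : ℤ) * t)) by ring, hnd s hsT]
    rw [h1, sub_self]
  -- expansion of the product over subsets
  have hexpand : ∀ x : ℤ, (∏ s ∈ T, (1 - e (d s * (x - a s))))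
      = ∑ I ∈ T.powerset, (-1 : ℂ) ^ I.card * e (D I * x - A I) := by
    intro x
    have h1 : ∀ s : Fin k, (1 : ℂ) - e (d s * (x - a s)) = (-(e (d s * (x - a s)))) + 1 :=
      fun s => by ring
    rw [Finset.prod_congr rfl fun s _ => h1 s, Finset.prod_add]
    refine Finset.sum_congr rfl fun I hI => ?_
    rw [Finset.prod_const_one, mul_one]
    have h2 : (∏ s ∈ I, -(e (d s * (x - a s))))
        = (-1 : ℂ) ^ I.card * ∏ s ∈ I, e (d s * (x - a s)) := by
      rw [show (fun s => -(e (d s * (x - a s)))) = fun s => (-1 : ℂ) * e (d s * (x - a s)) by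
        funext s; ring]
      rw [Finset.prod_mul_distrib, Finset.prod_const]
    rw [h2, hprod_e]
    congr 1
    congr 1
    rw [hDdef, hAdef]; simp only
    simp only [mul_sub]
    rw [Finset.sum_sub_distrib, Finset.sum_mul]
  -- grand computation
  have hkey : (0 : ℂ) = ∑ I ∈ T.powerset.filter (fun I => (N : ℤ) ∣ D I - D J),
      (-1 : ℂ) ^ I.card * e (-(A I)) * (N : ℂ) := by
    calc (0 : ℂ)
        = ∑ x ∈ Finset.range N, e (-(D J) * (x : ℤ)) *
            (∏ s ∈ T, (1 - e (d s * ((x : ℤ) - a s)))) := by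
          rw [Finset.sum_congr rfl (fun x _ => by rw [hzero ((x : ℕ) : ℤ), mul_zero]),
            Finset.sum_const_zero]
      _ = ∑ x ∈ Finset.range N, ∑ I ∈ T.powerset,
            e (-(D J) * (x : ℤ)) * ((-1 : ℂ) ^ I.card * e (D I * (x : ℤ) - A I)) := by
          refine Finset.sum_congr rfl fun x _ => ?_
          rw [hexpand, Finset.mul_sum]
      _ = ∑ I ∈ T.powerset, ∑ x ∈ Finset.range N,
            e (-(D J) * (x : ℤ)) * ((-1 : ℂ) ^ I.card * e (D I * (x : ℤ) - A I)) :=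
          Finset.sum_comm
      _ = ∑ I ∈ T.powerset, (-1 : ℂ) ^ I.card * e (-(A I)) *
            (∑ x ∈ Finset.range N, e ((D I - D J) * (x : ℤ))) := by
          refine Finset.sum_congr rfl fun I _ => ?_
          rw [Finset.mul_sum]
          refine Finset.sum_congr rfl fun x _ => ?_
          have h3 : (-(D J)) * (x : ℤ) + (D I * (x : ℤ) - A I)
              = (-(A I)) + (D I - D J) * (x : ℤ) := by ring
          calc e (-(D J) * (x : ℤ)) * ((-1 : ℂ) ^ I.card * e (D I * (x : ℤ) - A I))
              = (-1 : ℂ) ^ I.card * e ((-(D J)) * (x : ℤ) + (D I * (x : ℤ) - A I)) := by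
                rw [headd]; ring
            _ = (-1 : ℂ) ^ I.card * (e (-(A I)) * e ((D I - D J) * (x : ℤ))) := by
                rw [h3, headd]
            _ = (-1 : ℂ) ^ I.card * e (-(A I)) * e ((D I - D J) * (x : ℤ)) := by ring
      _ = ∑ I ∈ T.powerset, (-1 : ℂ) ^ I.card * e (-(A I)) *
            (if (N : ℤ) ∣ D I - D J then (N : ℂ) else 0) := by
          exact Finset.sum_congr rfl fun I _ => by rw [horth]
      _ = ∑ I ∈ T.powerset.filter (fun I => (N : ℤ) ∣ D I - D J),
            (-1 : ℂ) ^ I.card * e (-(A I)) * (N : ℂ) := by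
          rw [Finset.sum_filter]
          refine Finset.sum_congr rfl fun I _ => ?_
          split_ifs with h
          · rfl
          · rw [mul_zero]
  rw [hsingle, Finset.sum_singleton] at hkey
  have h1 : ((-1 : ℂ)) ^ J.card ≠ 0 := pow_ne_zero _ (by norm_num)
  have h2 : e (-(A J)) ≠ 0 := zpow_ne_zero _ hζ0
  have h3 : ((N : ℕ) : ℂ) ≠ 0 := Nat.cast_ne_zero.mpr hNpos.ne'
  exact (mul_ne_zero (mul_ne_zero h1 h2) h3) hkey.symm

/-- Main counting lemma, by induction on the covering multiplicity `m`. -/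
lemma mainL {k : ℕ} (a : Fin k → ℤ) (n : Fin k → ℕ) (m' : Fin k → ℕ) (hn : ∀ s, 0 < n s) :
    ∀ (m : ℕ) (T J : Finset (Fin k)), J ⊆ T →
      (∀ x : ℤ, m ≤ (T.filter fun s => (n s : ℤ) ∣ x - a s).card) →
      m + 1 ≤ (T.powerset.filter fun I =>
        Int.fract (∑ s ∈ I, (m' s : ℚ) / (n s : ℚ)) =
          Int.fract (∑ s ∈ J, (m' s : ℚ) / (n s : ℚ))).card := by
  intro m
  induction m with
  | zero =>
    intro T J hJ _
    refine Finset.card_pos.mpr ⟨J, Finset.mem_filter.mpr ⟨Finset.mem_powerset.mpr hJ, rfl⟩⟩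
  | succ m ih =>
    intro T J hJ hcov
    by_cases hex : ∃ I, I ⊆ T ∧ I ≠ J ∧
        Int.fract (∑ s ∈ I, (m' s : ℚ) / (n s : ℚ)) =
          Int.fract (∑ s ∈ J, (m' s : ℚ) / (n s : ℚ))
    · obtain ⟨I₁, hI₁T, hne, hfr⟩ := hex
      have hsd : ∃ s₀, (s₀ ∈ I₁ ∧ s₀ ∉ J) ∨ (s₀ ∈ J ∧ s₀ ∉ I₁) := by
        by_contra hno
        push_neg at hno
        apply hne
        ext s
        constructor
        · intro h
          by_contra h2
          exact h2 ((hno s).1 h)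
        · intro h
          by_contra h2
          exact h2 ((hno s).2 h)
      obtain ⟨s₀, hs₀⟩ := hsd
      have step : ∀ Ia Ib : Finset (Fin k), Ia ⊆ T → Ib ⊆ T → s₀ ∉ Ia → s₀ ∈ Ib →
          Int.fract (∑ s ∈ Ia, (m' s : ℚ) / (n s : ℚ)) =
            Int.fract (∑ s ∈ J, (m' s : ℚ) / (n s : ℚ)) →
          Int.fract (∑ s ∈ Ib, (m' s : ℚ) / (n s : ℚ)) =
            Int.fract (∑ s ∈ J, (m' s : ℚ) / (n s : ℚ)) →
          m + 1 + 1 ≤ (T.powerset.filter fun I =>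
            Int.fract (∑ s ∈ I, (m' s : ℚ) / (n s : ℚ)) =
              Int.fract (∑ s ∈ J, (m' s : ℚ) / (n s : ℚ))).card := by
        intro Ia Ib hIaT hIbT hsa hsb hfra hfrb
        set T' := T.erase s₀ with hT'
        have hs₀T : s₀ ∈ T := hIbT hsb
        have hcov' : ∀ x : ℤ, m ≤ (T'.filter fun s => (n s : ℤ) ∣ x - a s).card := by
          intro x
          have h1 := hcov x
          have h2 : (T.filter fun s => (n s : ℤ) ∣ x - a s) ⊆
              insert s₀ (T'.filter fun s => (n s : ℤ) ∣ x - a s) := by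
            intro s hs
            rcases Finset.mem_filter.mp hs with ⟨hsT, hP⟩
            by_cases h : s = s₀
            · exact h ▸ Finset.mem_insert_self _ _
            · exact Finset.mem_insert_of_mem
                (Finset.mem_filter.mpr ⟨Finset.mem_erase.mpr ⟨h, hsT⟩, hP⟩)
          have h3 := Finset.card_le_card h2
          have h4 := Finset.card_insert_le s₀ (T'.filter fun s => (n s : ℤ) ∣ x - a s)
          omega
        have hIa' : Ia ⊆ T' := fun s hs =>
          Finset.mem_erase.mpr ⟨fun h => hsa (h ▸ hs), hIaT hs⟩
        have hIb' : Ib.erase s₀ ⊆ T' := fun s hs => by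
          rcases Finset.mem_erase.mp hs with ⟨h1, h2⟩
          exact Finset.mem_erase.mpr ⟨h1, hIbT h2⟩
        have h1 := ih T' Ia hIa' hcov'
        have h2 := ih T' (Ib.erase s₀) hIb' hcov'
        set S := T.powerset.filter (fun I =>
          Int.fract (∑ s ∈ I, (m' s : ℚ) / (n s : ℚ)) =
            Int.fract (∑ s ∈ J, (m' s : ℚ) / (n s : ℚ))) with hSdef
        set S0 := T'.powerset.filter (fun I =>
          Int.fract (∑ s ∈ I, (m' s : ℚ) / (n s : ℚ)) =
            Int.fract (∑ s ∈ Ia, (m' s : ℚ) / (n s : ℚ))) with hS0def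
        set S1 := T'.powerset.filter (fun I =>
          Int.fract (∑ s ∈ I, (m' s : ℚ) / (n s : ℚ)) =
            Int.fract (∑ s ∈ Ib.erase s₀, (m' s : ℚ) / (n s : ℚ))) with hS1def
        have hS0 : S0 ⊆ S := by
          intro I hI
          rcases Finset.mem_filter.mp hI with ⟨hp, hf⟩
          exact Finset.mem_filter.mpr ⟨Finset.mem_powerset.mpr
            ((Finset.mem_powerset.mp hp).trans (Finset.erase_subset _ _)), hf.trans hfra⟩
        have himg : S1.image (insert s₀) ⊆ S := by
          intro I' hI'
          obtain ⟨I, hI, rfl⟩ := Finset.mem_image.mp hI'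
          rcases Finset.mem_filter.mp hI with ⟨hp, hf⟩
          have hIT' := Finset.mem_powerset.mp hp
          have hsnot : s₀ ∉ I := fun h => (Finset.mem_erase.mp (hIT' h)).1 rfl
          refine Finset.mem_filter.mpr ⟨Finset.mem_powerset.mpr
            (Finset.insert_subset_iff.mpr ⟨hs₀T, hIT'.trans (Finset.erase_subset _ _)⟩), ?_⟩
          have e1 : (∑ s ∈ insert s₀ I, (m' s : ℚ) / (n s : ℚ))
              = (m' s₀ : ℚ) / (n s₀ : ℚ) + ∑ s ∈ I, (m' s : ℚ) / (n s : ℚ) :=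
            Finset.sum_insert hsnot
          have e2 : (∑ s ∈ Ib, (m' s : ℚ) / (n s : ℚ))
              = (m' s₀ : ℚ) / (n s₀ : ℚ) + ∑ s ∈ Ib.erase s₀, (m' s : ℚ) / (n s : ℚ) := by
            conv_lhs => rw [← Finset.insert_erase hsb]
            exact Finset.sum_insert (Finset.notMem_erase _ _)
          rcases Int.fract_eq_fract.mp hf with ⟨z, hz⟩
          have h3 : Int.fract (∑ s ∈ insert s₀ I, (m' s : ℚ) / (n s : ℚ))
              = Int.fract (∑ s ∈ Ib, (m' s : ℚ) / (n s : ℚ)) :=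
            Int.fract_eq_fract.mpr ⟨z, by rw [e1, e2]; push_cast at hz ⊢; linarith⟩
          exact h3.trans hfrb
        have hinj : (S1.image (insert s₀)).card = S1.card := by
          refine Finset.card_image_of_injOn ?_
          intro I hI I2 hI2 hEq
          have g1 : s₀ ∉ I := fun h =>
            (Finset.mem_erase.mp ((Finset.mem_powerset.mp (Finset.mem_filter.mp hI).1) h)).1 rfl
          have g2 : s₀ ∉ I2 := fun h =>
            (Finset.mem_erase.mp ((Finset.mem_powerset.mp (Finset.mem_filter.mp hI2).1) h)).1 rfl
          rw [← Finset.erase_insert g1, ← Finset.erase_insert g2, hEq]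
        have hdisj : Disjoint S0 (S1.image (insert s₀)) := by
          rw [Finset.disjoint_left]
          intro I hI hI'
          have g1 : I ⊆ T' := Finset.mem_powerset.mp (Finset.mem_filter.mp hI).1
          obtain ⟨I2, _, rfl⟩ := Finset.mem_image.mp hI'
          exact (Finset.mem_erase.mp (g1 (Finset.mem_insert_self s₀ I2))).1 rfl
        have hunion : S0 ∪ S1.image (insert s₀) ⊆ S := Finset.union_subset hS0 himg
        have hle := Finset.card_le_card hunion
        rw [Finset.card_union_of_disjoint hdisj, hinj] at hle
        omega
      rcases hs₀ with ⟨h1, h2⟩ | ⟨h1, h2⟩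
      · exact step J I₁ hJ hI₁T h2 h1 rfl hfr
      · exact step I₁ J hI₁T hJ h2 h1 hfr rfl
    · push_neg at hex
      have hc1 : ∀ x : ℤ, ∃ s ∈ T, (n s : ℤ) ∣ x - a s := by
        intro x
        have h1 := hcov x
        have hpos : 0 < ((T.filter fun s => (n s : ℤ) ∣ x - a s)).card := by omega
        obtain ⟨s, hs⟩ := Finset.card_pos.mp hpos
        rcases Finset.mem_filter.mp hs with ⟨g1, g2⟩
        exact ⟨s, g1, g2⟩
      obtain ⟨I, g1, g2, g3⟩ := coreZ a n m' hn T hc1 J hJ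
      exact absurd g3 (hex I g1 g2)

/-- If `{a s + n s ℤ}` is an `m`-cover of `ℤ` and `m' s` are positive integers, then for any
subset `J` there are at least `m` subsets `I ≠ J` with the same fractional part of the
weighted subset sum as `J`. -/
theorem stmt5 (k m : ℕ) (a : Fin k → ℤ) (n : Fin k → ℕ) (hn : ∀ s, 0 < n s)
    (hcov : ∀ x : ℤ, m ≤ (univ.filter fun s => (n s : ℤ) ∣ x - a s).card)
    (m' : Fin k → ℕ) (hm' : ∀ s, 0 < m' s) (J : Finset (Fin k)) :
    m ≤ (univ.filter fun I : Finset (Fin k) => I ≠ J ∧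
      Int.fract (∑ s ∈ I, (m' s : ℚ) / (n s : ℚ)) =
        Int.fract (∑ s ∈ J, (m' s : ℚ) / (n s : ℚ))).card := by
  have h := mainL a n m' hn m univ J (Finset.subset_univ J) hcov
  set S := (univ : Finset (Fin k)).powerset.filter (fun I =>
    Int.fract (∑ s ∈ I, (m' s : ℚ) / (n s : ℚ)) =
      Int.fract (∑ s ∈ J, (m' s : ℚ) / (n s : ℚ))) with hSdef
  have hsub : S.erase J ⊆ (univ.filter fun I : Finset (Fin k) => I ≠ J ∧
      Int.fract (∑ s ∈ I, (m' s : ℚ) / (n s : ℚ)) =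
        Int.fract (∑ s ∈ J, (m' s : ℚ) / (n s : ℚ))) := by
    intro I hI
    rcases Finset.mem_erase.mp hI with ⟨hne, hIS⟩
    exact Finset.mem_filter.mpr ⟨Finset.mem_univ I, hne, (Finset.mem_filter.mp hIS).2⟩
  have h2 := Finset.card_le_card hsub
  have h3 := Finset.card_erase_of_mem (a := J) (s := S)
  have hJS : J ∈ S := Finset.mem_filter.mpr ⟨Finset.mem_powerset.mpr (Finset.subset_univ J), rfl⟩
  have h4 := h3 hJS
  omega
end

section
/- For every integer m ≥ 1 there exists an m-cover of ℤ (a finite system of arithmetic progressions covering every integer at least m times) that cannot be partitioned into two disjoint subsystems each of which is a cover of ℤ. -/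
open Finset

/-- For every `m ≥ 1` there is an `m`-cover of `ℤ` that cannot be split into two disjoint
subsystems each of which covers `ℤ`. -/
theorem stmt6 (m : ℕ) (hm : 1 ≤ m) :
    ∃ (k : ℕ) (a : Fin k → ℤ) (n : Fin k → ℕ),
      (∀ s, 0 < n s) ∧
      (∀ x : ℤ, m ≤ (univ.filter fun s => (n s : ℤ) ∣ x - a s).card) ∧
      ∀ I₁ I₂ : Finset (Fin k), Disjoint I₁ I₂ → I₁ ∪ I₂ = univ →
        ¬((∀ x : ℤ, ∃ s ∈ I₁, (n s : ℤ) ∣ x - a s) ∧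
          (∀ x : ℤ, ∃ s ∈ I₂, (n s : ℤ) ∣ x - a s)) := by
  classical
  set t : ℕ := 2 * m - 1 with ht
  set p : Fin t → ℕ := fun i => Nat.nth Nat.Prime i with hp
  have hpp : ∀ i, (p i).Prime := fun i => Nat.prime_nth_prime i
  have hpinj : Function.Injective p := fun i j h =>
    Fin.val_injective (Nat.nth_injective Nat.infinite_setOf_prime h)
  set Q : ℕ := ∏ i : Fin t, p i with hQ
  have hQpos : 0 < Q := Finset.prod_pos fun i _ => (hpp i).pos
  have hpQ : ∀ i, (p i : ℤ) ∣ (Q : ℤ) := fun i =>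
    Int.natCast_dvd_natCast.2 (Finset.dvd_prod_of_mem p (mem_univ i))
  set J : ℤ → ℕ := fun x => (univ.filter fun i : Fin t => (p i : ℤ) ∣ x).card with hJdef
  set ι := (Fin t) ⊕ (Fin m × {r : Fin Q // J ((r : ℕ) : ℤ) < m}) with hι
  set av : ι → ℤ := Sum.elim (fun _ => (0 : ℤ)) (fun cr => ((cr.2.1 : ℕ) : ℤ)) with hav
  set nv : ι → ℕ := Sum.elim (fun i => p i) (fun _ => Q) with hnv
  set k : ℕ := Fintype.card ι with hk
  set e : Fin k ≃ ι := (Fintype.equivFin ι).symm with he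
  refine ⟨k, fun s => av (e s), fun s => nv (e s), ?_, ?_, ?_⟩
  · intro s
    show 0 < nv (e s)
    rcases hse : e s with i | cr
    · exact (hpp i).pos
    · exact hQpos
  · -- m-cover
    intro x
    by_cases hc : m ≤ J x
    · refine le_trans hc ?_
      exact Finset.card_le_card_of_injOn (fun i : Fin t => e.symm (Sum.inl i))
        (fun i hi => by
          simp only [mem_coe, mem_filter, mem_univ, true_and] at hi ⊢
          simp only [Equiv.apply_symm_apply, hav, hnv, Sum.elim_inl, sub_zero]
          exact hi)
        (fun i _ j _ h => Sum.inl_injective (e.symm.injective h))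
    · push_neg at hc
      have hQz : (Q : ℤ) ≠ 0 := by exact_mod_cast hQpos.ne'
      have hQ' : (0 : ℤ) < (Q : ℤ) := by exact_mod_cast hQpos
      set r : ℕ := (x % (Q : ℤ)).toNat with hr
      have hrx : (r : ℤ) = x % (Q : ℤ) :=
        Int.toNat_of_nonneg (Int.emod_nonneg x hQz)
      have hrQ : r < Q := by
        have h2 : (r : ℤ) < (Q : ℤ) := hrx ▸ Int.emod_lt_of_pos x hQ'
        exact_mod_cast h2
      have hdvd : (Q : ℤ) ∣ x - (r : ℤ) := by
        rw [hrx]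
        exact ⟨x / Q, by rw [Int.emod_def]; ring⟩
      have hiff : ∀ i : Fin t, ((p i : ℤ) ∣ (r : ℤ)) ↔ ((p i : ℤ) ∣ x) := by
        intro i
        have hpd : (p i : ℤ) ∣ x - (r : ℤ) := (hpQ i).trans hdvd
        constructor
        · intro h
          have := dvd_add hpd h
          simpa using this
        · intro h
          have := dvd_sub h hpd
          simpa using this
      have hJr : J ((r : ℕ) : ℤ) < m := by
        have : J ((r : ℕ) : ℤ) = J x := by
          simp only [hJdef]
          congr 1
          exact Finset.filter_congr fun i _ => hiff i
        rw [this]; exact hc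
      set rr : {r' : Fin Q // J ((r' : ℕ) : ℤ) < m} := ⟨⟨r, hrQ⟩, hJr⟩ with hrr
      refine le_trans (le_of_eq (Finset.card_fin m).symm)
        (Finset.card_le_card_of_injOn (fun c : Fin m => e.symm (Sum.inr (c, rr))) ?_ ?_)
      · intro c _
        simp only [mem_coe, mem_filter, mem_univ, true_and]
        simp only [Equiv.apply_symm_apply, hav, hnv, Sum.elim_inr]
        exact hdvd
      · intro c _ c' _ h
        have h2 := Sum.inr_injective (e.symm.injective h)
        simpa using h2
  · -- not splittable
    rintro I₁ I₂ hdisj hunion ⟨h1, h2⟩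
    have hmem : ∀ s : Fin k, s ∈ I₂ ↔ s ∉ I₁ := by
      intro s
      constructor
      · intro h hh
        exact (Finset.disjoint_left.1 hdisj hh) h
      · intro h
        have hs : s ∈ I₁ ∪ I₂ := by rw [hunion]; exact mem_univ s
        rcases mem_union.1 hs with h' | h'
        · exact absurd h' h
        · exact h'
    have key : ∀ A B : Finset (Fin k), Disjoint A B →
        m ≤ (univ.filter fun i : Fin t => e.symm (Sum.inl i) ∈ A).card →
        (∀ x : ℤ, ∃ s ∈ B, (nv (e s) : ℤ) ∣ x - av (e s)) → False := by
      intro A B hAB hcard hcov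
      obtain ⟨T, hTsub, hTcard⟩ := Finset.exists_subset_card_eq hcard
      obtain ⟨s, hsB, hd⟩ := hcov (∏ i ∈ T, (p i : ℤ))
      rcases hse : e s with i | cr
      · rw [hse] at hd
        simp only [hav, hnv, Sum.elim_inl, sub_zero] at hd
        have hpr : Prime ((p i : ℕ) : ℤ) := Nat.prime_iff_prime_int.1 (hpp i)
        obtain ⟨i', hi'T, hdd⟩ := hpr.exists_mem_finset_dvd hd
        have heq : p i = p i' :=
          (Nat.prime_dvd_prime_iff_eq (hpp i) (hpp i')).1 (Int.natCast_dvd_natCast.1 hdd)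
        have hii : i = i' := hpinj heq
        subst hii
        have hiA : e.symm (Sum.inl i) ∈ A := (mem_filter.1 (hTsub hi'T)).2
        have hsA : s ∈ A := by
          have hs : s = e.symm (Sum.inl i) := by rw [← hse, Equiv.symm_apply_apply]
          rwa [hs]
        exact Finset.disjoint_left.1 hAB hsA hsB
      · rw [hse] at hd
        simp only [hav, hnv, Sum.elim_inr] at hd
        have hsubJ : T ⊆ univ.filter fun i : Fin t => (p i : ℤ) ∣ ((cr.2.1 : ℕ) : ℤ) := by
          intro i hiT
          simp only [mem_filter, mem_univ, true_and]
          have hx1 : (p i : ℤ) ∣ ∏ i' ∈ T, (p i' : ℤ) :=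
            Finset.dvd_prod_of_mem _ hiT
          have hx2 : (p i : ℤ) ∣ (∏ i' ∈ T, (p i' : ℤ)) - ((cr.2.1 : ℕ) : ℤ) :=
            (hpQ i).trans hd
          have := dvd_sub hx1 hx2
          simpa using this
        have h3 : T.card ≤ J ((cr.2.1 : ℕ) : ℤ) := Finset.card_le_card hsubJ
        exact absurd (le_trans (le_of_eq hTcard.symm) h3) (not_le.2 cr.2.2)
    set T₁ := univ.filter fun i : Fin t => e.symm (Sum.inl i) ∈ I₁ with hT1
    set T₂ := univ.filter fun i : Fin t => e.symm (Sum.inl i) ∈ I₂ with hT2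
    have hcompl : T₂ = T₁ᶜ := by
      ext i
      simp only [hT1, hT2, Finset.mem_compl, mem_filter, mem_univ, true_and]
      exact hmem (e.symm (Sum.inl i))
    have hsum : T₁.card + T₂.card = t := by
      rw [hcompl, Finset.card_add_card_compl]
      simp
    have hcases : m ≤ T₁.card ∨ m ≤ T₂.card := by omega
    rcases hcases with h | h
    · exact key I₁ I₂ hdisj h h2
    · exact key I₂ I₁ hdisj.symm h h1
end

section
/- Let K be an algebraic number field of degree n with a power integral basis 1, γ, γ², ..., γ^{n−1} of its ring of integers O_K over ℤ. For μ ∈ K write μ = Σ_{r=0}^{n−1} μ_r γ^r with μ_r ∈ ℚ, and let ψ(μ) = μ_{n−1} denote the last coordinate. Then μ ∈ O_K if and only if ψ(μ γ^j) ∈ ℤ for all j = 0, 1, ..., n−1. -/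
open Finset

private lemma intCoords {K : Type*} [Field K] [NumberField K] {n : ℕ}
    (γ : NumberField.RingOfIntegers K)
    (b : Module.Basis (Fin n) ℤ (NumberField.RingOfIntegers K)) (hb : ∀ i : Fin n, b i = γ ^ (i : ℕ))
    (bK : Module.Basis (Fin n) ℚ K) (hbK : ∀ i : Fin n, bK i = (γ : K) ^ (i : ℕ))
    (x : NumberField.RingOfIntegers K) (i : Fin n) :
    bK.repr (x : K) i = ((b.repr x i : ℤ) : ℚ) := by
  have hcast : ∀ j : Fin n, ((b j : K)) = bK j := by
    intro j
    rw [hb, hbK]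
    push_cast
    ring
  have hx : (x : K) = ∑ j, ((b.repr x j : ℚ)) • bK j := by
    conv_lhs => rw [← b.sum_repr x]
    push_cast
    simp [Int.cast_smul_eq_zsmul, hcast]
  rw [hx]
  rw [Module.Basis.repr_sum_self]

/-- Let `K` be a number field of degree `n` whose ring of integers has power integral basis
`1, γ, ..., γ^(n-1)`, and let `ψ` pick the coefficient of `γ^(n-1)`. Then `μ ∈ O_K` iff
`ψ(μ γ^j) ∈ ℤ` for all `j = 0, ..., n-1`. -/
theorem stmt7 (K : Type*) [Field K] [NumberField K] (n : ℕ) (hn : 0 < n)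
    (γ : NumberField.RingOfIntegers K)
    (b : Module.Basis (Fin n) ℤ (NumberField.RingOfIntegers K)) (hb : ∀ i : Fin n, b i = γ ^ (i : ℕ))
    (bK : Module.Basis (Fin n) ℚ K) (hbK : ∀ i : Fin n, bK i = (γ : K) ^ (i : ℕ))
    (μ : K) :
    (∃ ν : NumberField.RingOfIntegers K, (ν : K) = μ) ↔
      ∀ j : Fin n, ∃ z : ℤ,
        bK.repr (μ * (γ : K) ^ (j : ℕ)) ⟨n - 1, by omega⟩ = (z : ℚ) := by
  set last : Fin n := ⟨n - 1, by omega⟩ with hlast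
  constructor
  · rintro ⟨ν, rfl⟩ j
    refine ⟨b.repr (ν * γ ^ (j : ℕ)) last, ?_⟩
    have h1 : (ν : K) * (γ : K) ^ (j : ℕ) = ((ν * γ ^ (j : ℕ) : NumberField.RingOfIntegers K) : K) := by
      push_cast; ring
    rw [h1, intCoords γ b hb bK hbK]
  · intro h
    -- integer coefficients of powers of γ
    set C : ℕ → ℤ := fun t => b.repr (γ ^ t) last with hCdef
    have hCrepr : ∀ t : ℕ, bK.repr ((γ : K) ^ t) last = (C t : ℚ) := by
      intro t
      have h1 : (γ : K) ^ t = ((γ ^ t : NumberField.RingOfIntegers K) : K) := by push_cast; ring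
      rw [h1, intCoords γ b hb bK hbK]
    have hC0 : ∀ t : ℕ, t < n - 1 → (C t : ℚ) = 0 := by
      intro t ht
      rw [← hCrepr]
      have h1 : (γ : K) ^ t = bK ⟨t, by omega⟩ := (hbK ⟨t, by omega⟩).symm
      rw [h1, bK.repr_self]
      rw [Finsupp.single_apply]
      have : (⟨t, by omega⟩ : Fin n) ≠ last := by
        simp only [hlast, ne_eq, Fin.mk.injEq]
        omega
      simp [this]
    have hC1 : (C (n - 1) : ℚ) = 1 := by
      rw [← hCrepr]
      have h1 : (γ : K) ^ (n - 1) = bK last := (hbK last).symm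
      rw [h1, bK.repr_self]
      simp
    -- expansion of ψ(μ γ^j)
    have heq : ∀ j : Fin n, bK.repr (μ * (γ : K) ^ (j : ℕ)) last
        = ∑ i : Fin n, (bK.repr μ i) * (C ((i : ℕ) + (j : ℕ)) : ℚ) := by
      intro j
      have hmul : μ * (γ : K) ^ (j : ℕ)
          = ∑ i : Fin n, bK.repr μ i • ((γ : K) ^ ((i : ℕ) + (j : ℕ))) := by
        conv_lhs => rw [← bK.sum_repr μ]
        rw [Finset.sum_mul]
        refine Finset.sum_congr rfl fun i _ => ?_
        rw [smul_mul_assoc, hbK, ← pow_add]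
      rw [hmul, ← bK.coord_apply, map_sum]
      refine Finset.sum_congr rfl fun i _ => ?_
      rw [map_smul, smul_eq_mul, bK.coord_apply, hCrepr]
    set S : Subring ℚ := (Int.castRingHom ℚ).range with hSdef
    have hmemS : ∀ x : ℚ, x ∈ S ↔ ∃ z : ℤ, (z : ℚ) = x := by
      intro x; simp [hSdef, RingHom.mem_range]
    -- key induction
    have key : ∀ k : ℕ, k < n → bK.repr μ ⟨n - 1 - k, by omega⟩ ∈ S := by
      intro k
      induction k using Nat.strong_induction_on with
      | _ k IH =>
        intro hk
        obtain ⟨z, hz⟩ := h ⟨k, hk⟩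
        rw [heq ⟨k, hk⟩] at hz
        set i0 : Fin n := ⟨n - 1 - k, by omega⟩ with hi0
        have hsplit : (z : ℚ) = bK.repr μ i0 * (C ((i0 : ℕ) + k) : ℚ)
            + ∑ i ∈ Finset.univ.erase i0, (bK.repr μ i) * (C ((i : ℕ) + k) : ℚ) := by
          rw [← hz, ← Finset.add_sum_erase _ _ (Finset.mem_univ i0)]
        have hCi0 : (C ((i0 : ℕ) + k) : ℚ) = 1 := by
          have : (i0 : ℕ) + k = n - 1 := by simp only [hi0]; omega
          rw [this, hC1]
        rw [hCi0, mul_one] at hsplit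
        have hrest : ∑ i ∈ Finset.univ.erase i0, (bK.repr μ i) * (C ((i : ℕ) + k) : ℚ) ∈ S := by
          refine Subring.sum_mem S fun i hi => ?_
          have hine : i ≠ i0 := Finset.ne_of_mem_erase hi
          rcases lt_or_gt_of_ne (fun hc : (i : ℕ) = (i0 : ℕ) => hine (Fin.ext hc)) with hlt | hgt
          · have : (C ((i : ℕ) + k) : ℚ) = 0 := hC0 _ (by simp only [hi0] at hlt ⊢; omega)
            rw [this, mul_zero]
            exact Subring.zero_mem S
          · have hkn : (i : ℕ) ≤ n - 1 := by omega
            have hk' : n - 1 - (i : ℕ) < k := by simp only [hi0] at hgt; omega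
            have := IH (n - 1 - (i : ℕ)) hk' (by omega)
            have hieq : (⟨n - 1 - (n - 1 - (i : ℕ)), by omega⟩ : Fin n) = i := by
              apply Fin.ext; simp; omega
            rw [hieq] at this
            exact Subring.mul_mem S this (by rw [hmemS]; exact ⟨_, rfl⟩)
        have : bK.repr μ i0 = (z : ℚ) - ∑ i ∈ Finset.univ.erase i0, (bK.repr μ i) * (C ((i : ℕ) + k) : ℚ) := by
          rw [hsplit]; ring
        rw [this]
        exact Subring.sub_mem S (by rw [hmemS]; exact ⟨z, rfl⟩) hrest
    have hall : ∀ i : Fin n, ∃ z : ℤ, (z : ℚ) = bK.repr μ i := by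
      intro i
      have h1 := key (n - 1 - (i : ℕ)) (by omega)
      have hieq : (⟨n - 1 - (n - 1 - (i : ℕ)), by omega⟩ : Fin n) = i := by
        apply Fin.ext; simp; omega
      rw [hieq, hmemS] at h1
      exact h1
    choose z hz using hall
    refine ⟨∑ i : Fin n, z i • b i, ?_⟩
    have hcast : ∀ j : Fin n, ((b j : K)) = bK j := by
      intro j; rw [hb, hbK]; push_cast; ring
    have h2 : ((∑ i : Fin n, z i • b i : NumberField.RingOfIntegers K) : K)
        = ∑ i : Fin n, ((z i : ℚ)) • bK i := by
      push_cast
      simp [Int.cast_smul_eq_zsmul, hcast]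
    rw [h2]
    conv_rhs => rw [← bK.sum_repr μ]
    exact Finset.sum_congr rfl fun i _ => by rw [hz]
end

section
/- Let K be an algebraic number field whose ring of integers O_K has a power integral basis. Suppose {α_s + β_s O_K}_{s=1}^k is an m-cover of O_K, i.e., every x ∈ O_K lies in at least m of the residue classes α_s + β_s O_K (with α_s, β_s ∈ O_K, β_s ≠ 0). Let ω_1,...,ω_k ∈ O_K. Then for any μ ∈ K, the set { I ⊆ {1,...,k} : Σ_{s∈I} ω_s/β_s ∈ μ + O_K } is either empty or has at least 2^m elements. -/
open Finset NumberField

open Module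

open scoped Classical

variable {k : ℕ}

/-- Upward zeta transform of `w`. -/
noncomputable def sunZeta (w : Finset (Fin k) → ℂ) (U : Finset (Fin k)) : ℂ :=
  ∑ J ∈ univ.powerset.filter (fun J => U ⊆ J), w J

lemma sunPowAlt (x : Finset (Fin k)) :
    ∑ m ∈ x.powerset, (-1 : ℂ) ^ m.card = if x = ∅ then 1 else 0 := by
  have h := Finset.sum_powerset_neg_one_pow_card (x := x)
  have h2 : ((∑ m ∈ x.powerset, (-1 : ℤ) ^ m.card : ℤ) : ℂ)
      = ∑ m ∈ x.powerset, (-1 : ℂ) ^ m.card := by push_cast; rfl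
  rw [← h2, h]
  split_ifs <;> simp

lemma sunInnerSum (W C : Finset (Fin k)) :
    ∑ W' ∈ C.powerset.filter (fun W' => W ⊆ W'), (-1 : ℂ) ^ W'.card
      = if C = W then (-1 : ℂ) ^ W.card else 0 := by
  by_cases hWC : W ⊆ C
  · have hbij : ∑ W' ∈ C.powerset.filter (fun W' => W ⊆ W'), (-1 : ℂ) ^ W'.card
        = ∑ V ∈ (C \ W).powerset, (-1 : ℂ) ^ (V.card + W.card) := by
      refine Finset.sum_nbij' (fun W' => W' \ W) (fun V => V ∪ W) ?_ ?_ ?_ ?_ ?_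
      · intro W' hW'
        simp only [mem_filter, mem_powerset] at hW'
        simpa [mem_powerset] using sdiff_subset_sdiff hW'.1 (Finset.Subset.refl W)
      · intro V hV
        simp only [mem_powerset] at hV
        simp only [mem_filter, mem_powerset]
        constructor
        · exact union_subset (hV.trans (sdiff_subset)) hWC
        · exact subset_union_right
      · intro W' hW'
        simp only [mem_filter, mem_powerset] at hW'
        exact sdiff_union_of_subset hW'.2
      · intro V hV
        simp only [mem_powerset] at hV
        have : Disjoint V W := disjoint_of_subset_left hV sdiff_disjoint
        exact union_sdiff_cancel_right this
      · intro W' hW'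
        simp only [mem_filter, mem_powerset] at hW'
        have : (W' \ W).card + W.card = W'.card := by
          rw [card_sdiff_add_card_eq_card hW'.2]
        rw [this]
    rw [hbij]
    have : ∑ V ∈ (C \ W).powerset, (-1 : ℂ) ^ (V.card + W.card)
        = (∑ V ∈ (C \ W).powerset, (-1 : ℂ) ^ V.card) * (-1 : ℂ) ^ W.card := by
      rw [Finset.sum_mul]
      exact Finset.sum_congr rfl fun V _ => (pow_add _ _ _)
    rw [this, sunPowAlt]
    by_cases hCW : C = W
    · simp [hCW]
    · have : C \ W ≠ ∅ := by
        rw [Ne, sdiff_eq_empty_iff_subset]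
        intro h
        exact hCW (Finset.Subset.antisymm h hWC)
      simp [this, hCW]
  · have h1 : C.powerset.filter (fun W' => W ⊆ W') = ∅ := by
      rw [filter_eq_empty_iff]
      intro W' hW' hsub
      exact hWC (hsub.trans (mem_powerset.1 hW'))
    have h2 : C ≠ W := fun h => hWC (h ▸ Finset.Subset.refl W)
    simp [h1, h2]

lemma sunKey (w : Finset (Fin k) → ℂ) (W C : Finset (Fin k)) :
    ∑ W' ∈ C.powerset.filter (fun W' => W ⊆ W'), (-1 : ℂ) ^ W'.card * sunZeta w W'
      = (-1 : ℂ) ^ W.card * ∑ J ∈ univ.powerset.filter (fun J => J ∩ C = W), w J := by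
  have step1 : ∀ W' : Finset (Fin k), (-1 : ℂ) ^ W'.card * sunZeta w W'
      = ∑ J ∈ univ.powerset, (if W' ⊆ J then (-1 : ℂ) ^ W'.card * w J else 0) := by
    intro W'
    rw [sunZeta, Finset.mul_sum, Finset.sum_filter]
  calc ∑ W' ∈ C.powerset.filter (fun W' => W ⊆ W'), (-1 : ℂ) ^ W'.card * sunZeta w W'
      = ∑ W' ∈ C.powerset.filter (fun W' => W ⊆ W'),
          ∑ J ∈ univ.powerset, (if W' ⊆ J then (-1 : ℂ) ^ W'.card * w J else 0) := by
        exact Finset.sum_congr rfl fun W' _ => step1 W'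
    _ = ∑ J ∈ univ.powerset, ∑ W' ∈ C.powerset.filter (fun W' => W ⊆ W'),
          (if W' ⊆ J then (-1 : ℂ) ^ W'.card * w J else 0) := Finset.sum_comm
    _ = ∑ J ∈ univ.powerset, (if J ∩ C = W then (-1 : ℂ) ^ W.card else 0) * w J := by
        refine Finset.sum_congr rfl fun J _ => ?_
        rw [← Finset.sum_filter]
        have hset : (C.powerset.filter (fun W' => W ⊆ W')).filter (fun W' => W' ⊆ J)
            = (C ∩ J).powerset.filter (fun W' => W ⊆ W') := by
          ext W'
          simp only [mem_filter, mem_powerset, subset_inter_iff]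
          tauto
        have : ∑ W' ∈ (C.powerset.filter (fun W' => W ⊆ W')).filter (fun W' => W' ⊆ J),
            (-1 : ℂ) ^ W'.card * w J
            = (∑ W' ∈ (C ∩ J).powerset.filter (fun W' => W ⊆ W'), (-1 : ℂ) ^ W'.card) * w J := by
          rw [hset, Finset.sum_mul]
        rw [this, sunInnerSum]
        have : C ∩ J = J ∩ C := Finset.inter_comm _ _
        rw [this]
    _ = ∑ J ∈ univ.powerset, (if J ∩ C = W then (-1 : ℂ) ^ W.card * w J else 0) :=
        Finset.sum_congr rfl fun J _ => by split_ifs <;> simp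
    _ = ∑ J ∈ univ.powerset.filter (fun J => J ∩ C = W), (-1 : ℂ) ^ W.card * w J :=
        (Finset.sum_filter _ _).symm
    _ = (-1 : ℂ) ^ W.card * ∑ J ∈ univ.powerset.filter (fun J => J ∩ C = W), w J :=
        (Finset.mul_sum _ _ _).symm

/-- The key combinatorial lemma: if all "disjoint-from-small-sets" sums of `w` vanish
and `w` is not identically zero, its support has at least `2^m` elements. -/
lemma sunComb (m : ℕ) (w : Finset (Fin k) → ℂ)
    (hw : ∀ U : Finset (Fin k), U.card < m →
      ∑ J ∈ univ.powerset.filter (fun J => J ∩ U = ∅), w J = 0)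
    (J₀ : Finset (Fin k)) (hJ₀ : w J₀ ≠ 0) :
    2 ^ m ≤ (univ.filter (fun J : Finset (Fin k) => w J ≠ 0)).card := by
  -- Step A: the zeta transform vanishes on small sets
  have hzero : ∀ c : ℕ, ∀ U : Finset (Fin k), U.card = c → U.card < m → sunZeta w U = 0 := by
    intro c
    induction c using Nat.strong_induction_on with
    | _ c IH =>
      intro U hUc hUm
      have hkey := sunKey w ∅ U
      simp only [Finset.card_empty, pow_zero, one_mul, Finset.inter_comm] at hkey
      have hfil : U.powerset.filter (fun W' => (∅ : Finset (Fin k)) ⊆ W') = U.powerset := by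
        apply Finset.filter_true_of_mem; intro x _; exact Finset.empty_subset x
      rw [hfil] at hkey
      have hrhs : ∑ J ∈ univ.powerset.filter (fun J => U ∩ J = ∅), w J = 0 := by
        have := hw U hUm
        simpa [Finset.inter_comm] using this
      rw [hrhs] at hkey
      have hU : U ∈ U.powerset := Finset.mem_powerset_self U
      rw [← Finset.add_sum_erase _ _ hU] at hkey
      have herase : ∑ W' ∈ U.powerset.erase U, (-1 : ℂ) ^ W'.card * sunZeta w W' = 0 := by
        apply Finset.sum_eq_zero
        intro W' hW'
        have hW'sub : W' ⊆ U := Finset.mem_powerset.1 (Finset.mem_of_mem_erase hW')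
        have hW'ne : W' ≠ U := Finset.ne_of_mem_erase hW'
        have hlt : W'.card < U.card := Finset.card_lt_card (lt_of_le_of_ne hW'sub hW'ne)
        rw [IH W'.card (hUc ▸ hlt) W' rfl (lt_trans (hUc ▸ hlt) (hUc ▸ hUm))]
        ring
      rw [herase, add_zero] at hkey
      have hne : (-1 : ℂ) ^ U.card ≠ 0 := pow_ne_zero _ (by norm_num)
      exact (mul_eq_zero.1 hkey).resolve_left hne
  -- Step B: find a maximal element of the support; zeta is nonzero there
  set supp := univ.filter (fun J : Finset (Fin k) => w J ≠ 0) with hsupp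
  have hsuppne : supp.Nonempty := ⟨J₀, by simp [hsupp, hJ₀]⟩
  obtain ⟨Jmax, hJmaxmem, hJmax⟩ := Finset.exists_max_image supp Finset.card hsuppne
  have hwJmax : w Jmax ≠ 0 := (Finset.mem_filter.1 hJmaxmem).2
  have hzJmax : sunZeta w Jmax = w Jmax := by
    rw [sunZeta]
    apply Finset.sum_eq_single_of_mem
    · simp [Finset.mem_powerset]
    · intro J hJ hJne
      simp only [Finset.mem_filter, Finset.mem_powerset] at hJ
      by_contra hwJ
      have hJsupp : J ∈ supp := by simp [hsupp, hwJ]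
      have hcard : J.card ≤ Jmax.card := hJmax J hJsupp
      have : Jmax.card < J.card := Finset.card_lt_card (lt_of_le_of_ne hJ.2 (Ne.symm hJne))
      omega
  -- Step C: take a minimal-cardinality set with nonzero zeta transform
  set T := univ.filter (fun V : Finset (Fin k) => sunZeta w V ≠ 0) with hT
  have hTne : T.Nonempty := ⟨Jmax, by simp [hT, hzJmax, hwJmax]⟩
  obtain ⟨V₀, hV₀T, hV₀min⟩ := Finset.exists_min_image T Finset.card hTne
  have hzV₀ : sunZeta w V₀ ≠ 0 := (Finset.mem_filter.1 hV₀T).2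
  have hmV₀ : m ≤ V₀.card := by
    by_contra h
    exact hzV₀ (hzero V₀.card V₀ rfl (by omega))
  have hlow : ∀ V : Finset (Fin k), V.card < V₀.card → sunZeta w V = 0 := by
    intro V hV
    by_contra h
    have : V ∈ T := by simp [hT, h]
    have := hV₀min V this
    omega
  -- Step D: every subset of V₀ is an intersection with V₀ of a support element
  have hstepD : ∀ W ∈ V₀.powerset, ∃ J, J ∈ supp ∧ J ∩ V₀ = W := by
    intro W hW
    have hWV₀ : W ⊆ V₀ := Finset.mem_powerset.1 hW
    have hkey := sunKey w W V₀
    have hLHS : ∑ W' ∈ V₀.powerset.filter (fun W' => W ⊆ W'), (-1 : ℂ) ^ W'.card * sunZeta w W'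
        = (-1 : ℂ) ^ V₀.card * sunZeta w V₀ := by
      rw [Finset.sum_eq_single_of_mem V₀]
      · simp [Finset.mem_powerset_self, hWV₀]
      · intro W' hW' hne
        simp only [Finset.mem_filter, Finset.mem_powerset] at hW'
        have : W'.card < V₀.card := Finset.card_lt_card (lt_of_le_of_ne hW'.1 hne)
        rw [hlow W' this]
        ring
    rw [hLHS] at hkey
    have hne : (-1 : ℂ) ^ V₀.card * sunZeta w V₀ ≠ 0 :=
      mul_ne_zero (pow_ne_zero _ (by norm_num)) hzV₀
    rw [hkey] at hne
    have hsumne : ∑ J ∈ univ.powerset.filter (fun J => J ∩ V₀ = W), w J ≠ 0 := by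
      intro h
      rw [h, mul_zero] at hne
      exact hne rfl
    obtain ⟨J, hJmem, hJne⟩ := Finset.exists_ne_zero_of_sum_ne_zero hsumne
    simp only [Finset.mem_filter, Finset.mem_powerset] at hJmem
    exact ⟨J, by simp [hsupp, hJne], hJmem.2⟩
  -- Step E: conclude with a counting argument
  have hcard : V₀.powerset ⊆ supp.image (fun J => J ∩ V₀) := by
    intro W hW
    obtain ⟨J, hJ, hJW⟩ := hstepD W hW
    exact Finset.mem_image.2 ⟨J, hJ, hJW⟩
  calc 2 ^ m ≤ 2 ^ V₀.card := Nat.pow_le_pow_right (by norm_num) hmV₀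
    _ = V₀.powerset.card := (Finset.card_powerset V₀).symm
    _ ≤ (supp.image (fun J => J ∩ V₀)).card := Finset.card_le_card hcard
    _ ≤ supp.card := Finset.card_image_le

section SunChar

variable {K : Type*} [Field K] [NumberField K]

noncomputable def sunTop (K : Type*) [Field K] [NumberField K] : Fin (Module.finrank ℚ K) :=
  ⟨Module.finrank ℚ K - 1, by have := Module.finrank_pos (R := ℚ) (M := K); omega⟩

/-- The rational basis of `K` obtained from an integral basis. -/
noncomputable def sunB (b : Basis (Fin (Module.finrank ℚ K)) ℤ (𝓞 K)) :
    Basis (Fin (Module.finrank ℚ K)) ℚ K :=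
  Basis.localizationLocalization ℚ (nonZeroDivisors ℤ) K b

/-- Top coordinate functional. -/
noncomputable def sunQ (b : Basis (Fin (Module.finrank ℚ K)) ℤ (𝓞 K)) (v : K) : ℚ :=
  (sunB b).repr v (sunTop K)

/-- The additive character of `K` trivial on `𝓞 K`. -/
noncomputable def sunPsi (b : Basis (Fin (Module.finrank ℚ K)) ℤ (𝓞 K)) (v : K) : ℂ :=
  Complex.exp (2 * (Real.pi : ℂ) * Complex.I * ((sunQ b v : ℚ) : ℂ))

variable (b : Basis (Fin (Module.finrank ℚ K)) ℤ (𝓞 K))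

lemma sunQ_add (u v : K) : sunQ b (u + v) = sunQ b u + sunQ b v := by
  simp [sunQ, map_add]

lemma sunPsi_add (u v : K) : sunPsi b (u + v) = sunPsi b u * sunPsi b v := by
  rw [sunPsi, sunPsi, sunPsi, ← Complex.exp_add, sunQ_add]
  congr 1
  push_cast
  ring

lemma sunPsi_ne_zero (v : K) : sunPsi b v ≠ 0 := Complex.exp_ne_zero _

lemma sunPsi_zero : sunPsi b 0 = 1 := by
  simp [sunPsi, sunQ]

lemma sunQ_int (z : 𝓞 K) : ∃ t : ℤ, sunQ b (algebraMap (𝓞 K) K z) = t := by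
  refine ⟨b.repr z (sunTop K), ?_⟩
  rw [sunQ, sunB, Basis.localizationLocalization_repr_algebraMap]
  simp

lemma sunPsi_int (v : K) (h : ∃ t : ℤ, sunQ b v = t) : sunPsi b v = 1 := by
  obtain ⟨t, ht⟩ := h
  rw [sunPsi, ht]
  rw [show (2 * (Real.pi : ℂ) * Complex.I * (((t : ℚ) : ℚ) : ℂ)) =
    (t : ℂ) * (2 * (Real.pi : ℂ) * Complex.I) by push_cast; ring]
  exact Complex.exp_int_mul_two_pi_mul_I t

lemma sunPsi_coe (z : 𝓞 K) : sunPsi b (algebraMap (𝓞 K) K z) = 1 :=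
  sunPsi_int b _ (sunQ_int b z)

lemma sunPsi_ne_one (v : K) (h : ¬ ∃ t : ℤ, sunQ b v = t) : sunPsi b v ≠ 1 := by
  intro h1
  rw [sunPsi, Complex.exp_eq_one_iff] at h1
  obtain ⟨t, ht⟩ := h1
  refine h ⟨t, ?_⟩
  have h2 : (2 * (Real.pi : ℂ) * Complex.I) ≠ 0 := by
    simp [Real.pi_ne_zero, Complex.I_ne_zero]
  have ht' : (2 * (Real.pi : ℂ) * Complex.I) * ((sunQ b v : ℚ) : ℂ)
      = (2 * (Real.pi : ℂ) * Complex.I) * (t : ℂ) := by rw [ht]; ring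
  have := mul_left_cancel₀ h2 ht'
  exact_mod_cast this

lemma sun_mem_span {x : K} :
    x ∈ Submodule.span ℤ (Set.range (sunB b)) ↔ x ∈ (algebraMap (𝓞 K) K).range := by
  rw [sunB, Basis.localizationLocalization_span, LinearMap.mem_range]
  simp [RingHom.mem_range]

lemma sunExists (γ : 𝓞 K) (hb : ∀ i, b i = γ ^ (i : ℕ)) (v : K)
    (hv : ¬ ∃ z : 𝓞 K, algebraMap (𝓞 K) K z = v) :
    ∃ x : 𝓞 K, sunPsi b (algebraMap (𝓞 K) K x * v) ≠ 1 := by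
  have hvspan : v ∉ Submodule.span ℤ (Set.range (sunB b)) := by
    rw [sun_mem_span]
    rintro ⟨z, hz⟩
    exact hv ⟨z, hz⟩
  have hbad : ∃ i, ¬ ∃ t : ℤ, (sunB b).repr v i = t := by
    by_contra hcon
    push_neg at hcon
    apply hvspan
    rw [Basis.mem_span_iff_repr_mem]
    intro i
    obtain ⟨t, ht⟩ := hcon i
    exact ⟨t, by simpa using ht.symm⟩
  set bad := univ.filter (fun i : Fin (Module.finrank ℚ K) => ¬ ∃ t : ℤ, (sunB b).repr v i = t) with hbaddef
  have hbadne : bad.Nonempty := by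
    obtain ⟨i, hi⟩ := hbad
    exact ⟨i, by simp only [hbaddef, Finset.mem_filter, Finset.mem_univ, true_and]; exact hi⟩
  obtain ⟨j, hjmem, hjmax⟩ := Finset.exists_max_image bad (fun i => (i : ℕ)) hbadne
  have hjbad : ¬ ∃ t : ℤ, (sunB b).repr v j = t := (Finset.mem_filter.1 hjmem).2
  have hjle : (j : ℕ) ≤ Module.finrank ℚ K - 1 := by have := j.isLt; omega
  set x : 𝓞 K := γ ^ (Module.finrank ℚ K - 1 - (j : ℕ)) with hx
  refine ⟨x, ?_⟩
  have hterm : ∀ i : Fin (Module.finrank ℚ K), algebraMap (𝓞 K) K x * (sunB b) i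
      = algebraMap (𝓞 K) K (γ ^ (Module.finrank ℚ K - 1 - (j : ℕ) + (i : ℕ))) := by
    intro i
    rw [sunB, Basis.localizationLocalization_apply, hb i, hx, ← map_mul, ← pow_add]
  have hxv : algebraMap (𝓞 K) K x * v
      = ∑ i : Fin (Module.finrank ℚ K), (sunB b).repr v i •
          (algebraMap (𝓞 K) K (γ ^ (Module.finrank ℚ K - 1 - (j : ℕ) + (i : ℕ)))) := by
    conv_lhs => rw [← (sunB b).sum_repr v]
    rw [Finset.mul_sum]
    exact Finset.sum_congr rfl fun i _ => by rw [mul_smul_comm, hterm i]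
  have hQ : sunQ b (algebraMap (𝓞 K) K x * v)
      = ∑ i : Fin (Module.finrank ℚ K), (sunB b).repr v i *
          sunQ b (algebraMap (𝓞 K) K (γ ^ (Module.finrank ℚ K - 1 - (j : ℕ) + (i : ℕ)))) := by
    rw [sunQ, hxv, map_sum, Finsupp.finset_sum_apply]
    refine Finset.sum_congr rfl fun i _ => ?_
    rw [map_smul, Finsupp.smul_apply, smul_eq_mul, sunQ]
  have hcj : sunQ b (algebraMap (𝓞 K) K (γ ^ (Module.finrank ℚ K - 1 - (j : ℕ) + (j : ℕ)))) = 1 := by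
    have he : Module.finrank ℚ K - 1 - (j : ℕ) + (j : ℕ) = Module.finrank ℚ K - 1 := by omega
    rw [he, show γ ^ (Module.finrank ℚ K - 1) = b (sunTop K) from by rw [hb]; rfl]
    rw [sunQ, sunB, Basis.localizationLocalization_repr_algebraMap, Basis.repr_self]
    simp
  have hclt : ∀ i : Fin (Module.finrank ℚ K), (i : ℕ) < (j : ℕ) →
      sunQ b (algebraMap (𝓞 K) K (γ ^ (Module.finrank ℚ K - 1 - (j : ℕ) + (i : ℕ)))) = 0 := by
    intro i hij
    have hlt : Module.finrank ℚ K - 1 - (j : ℕ) + (i : ℕ) < Module.finrank ℚ K - 1 := by omega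
    have he : γ ^ (Module.finrank ℚ K - 1 - (j : ℕ) + (i : ℕ)) = b ⟨Module.finrank ℚ K - 1 - (j : ℕ) + (i : ℕ), by omega⟩ := by
      rw [hb]
    rw [he, sunQ, sunB, Basis.localizationLocalization_repr_algebraMap, Basis.repr_self]
    have hne : (⟨Module.finrank ℚ K - 1 - (j : ℕ) + (i : ℕ), by omega⟩ : Fin (Module.finrank ℚ K)) ≠ sunTop K := by
      intro h
      have := congrArg Fin.val h
      simp only [sunTop] at this
      omega
    rw [Finsupp.single_apply, if_neg hne]
    simp
  have hint : ∀ i : Fin (Module.finrank ℚ K), (j : ℕ) < (i : ℕ) → ∃ t : ℤ, (sunB b).repr v i *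
      sunQ b (algebraMap (𝓞 K) K (γ ^ (Module.finrank ℚ K - 1 - (j : ℕ) + (i : ℕ)))) = t := by
    intro i hij
    have hi : ∃ t : ℤ, (sunB b).repr v i = t := by
      by_contra hcon
      have hmem : i ∈ bad := by
        simp only [hbaddef, Finset.mem_filter, Finset.mem_univ, true_and]
        exact hcon
      have := hjmax i hmem
      omega
    obtain ⟨t1, ht1⟩ := hi
    obtain ⟨t2, ht2⟩ := sunQ_int b (γ ^ (Module.finrank ℚ K - 1 - (j : ℕ) + (i : ℕ)))
    exact ⟨t1 * t2, by rw [ht1, ht2]; push_cast; ring⟩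
  have hdiff : ∃ t : ℤ, sunQ b (algebraMap (𝓞 K) K x * v) - (sunB b).repr v j = t := by
    rw [hQ, ← Finset.add_sum_erase _ _ (Finset.mem_univ j), hcj, mul_one, add_sub_cancel_left]
    have hadd : ∀ a c : ℚ, (∃ t : ℤ, a = (t : ℚ)) → (∃ t : ℤ, c = (t : ℚ)) →
        (∃ t : ℤ, a + c = (t : ℚ)) := by
      rintro a c ⟨t1, ht1⟩ ⟨t2, ht2⟩
      exact ⟨t1 + t2, by rw [ht1, ht2]; push_cast; ring⟩
    have hbase : ∀ i ∈ univ.erase j, (∃ t : ℤ, (sunB b).repr v i *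
        sunQ b (algebraMap (𝓞 K) K (γ ^ (Module.finrank ℚ K - 1 - (j : ℕ) + (i : ℕ)))) = (t : ℚ)) := by
      intro i hi
      have hij : i ≠ j := Finset.ne_of_mem_erase hi
      rcases lt_or_gt_of_ne (fun h => hij (Fin.val_injective h)) with h | h
      · exact ⟨0, by rw [hclt i h]; simp⟩
      · exact hint i h
    exact Finset.sum_induction _ (fun r => ∃ t : ℤ, r = (t : ℚ)) hadd ⟨0, by simp⟩ hbase
  apply sunPsi_ne_one
  rintro ⟨t, ht⟩
  apply hjbad
  obtain ⟨t2, ht2⟩ := hdiff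
  refine ⟨t - t2, ?_⟩
  push_cast
  rw [ht] at ht2
  linarith

/-- The character `x ↦ ψ(xθ)` of the additive group of `𝓞 K`, as a monoid hom. -/
noncomputable def sunChi (b : Basis (Fin (Module.finrank ℚ K)) ℤ (𝓞 K)) (θ : K) :
    Multiplicative (𝓞 K) →* ℂ where
  toFun x := sunPsi b (algebraMap (𝓞 K) K (Multiplicative.toAdd x) * θ)
  map_one' := by
    simp only [toAdd_one, map_zero, zero_mul]
    exact sunPsi_zero b
  map_mul' x y := by
    simp only [toAdd_mul, map_add, add_mul]
    exact sunPsi_add b _ _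

lemma sunChi_apply (θ : K) (x : Multiplicative (𝓞 K)) :
    sunChi b θ x = sunPsi b (algebraMap (𝓞 K) K (Multiplicative.toAdd x) * θ) := rfl

lemma sunChi_eq_iff (γ : 𝓞 K) (hb : ∀ i, b i = γ ^ (i : ℕ)) (θ μ : K) :
    sunChi b θ = sunChi b μ ↔ ∃ ν : 𝓞 K, θ - μ = algebraMap (𝓞 K) K ν := by
  constructor
  · intro h
    by_contra hcon
    push_neg at hcon
    have hnr : ¬ ∃ z : 𝓞 K, algebraMap (𝓞 K) K z = θ - μ := by
      rintro ⟨z, hz⟩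
      exact hcon z hz.symm
    obtain ⟨x, hx⟩ := sunExists b γ hb (θ - μ) hnr
    apply hx
    have h1 : sunChi b θ (Multiplicative.ofAdd x) = sunChi b μ (Multiplicative.ofAdd x) := by
      rw [h]
    rw [sunChi_apply, sunChi_apply] at h1
    have h2 : algebraMap (𝓞 K) K (Multiplicative.toAdd (Multiplicative.ofAdd x)) * θ
        = algebraMap (𝓞 K) K (Multiplicative.toAdd (Multiplicative.ofAdd x)) * μ
          + algebraMap (𝓞 K) K x * (θ - μ) := by
      simp only [toAdd_ofAdd]
      ring
    rw [h2, sunPsi_add] at h1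
    have h3 : sunPsi b (algebraMap (𝓞 K) K (Multiplicative.toAdd (Multiplicative.ofAdd x)) * μ)
        ≠ 0 := sunPsi_ne_zero b _
    have h4 : sunPsi b (algebraMap (𝓞 K) K (Multiplicative.toAdd (Multiplicative.ofAdd x)) * μ)
        * sunPsi b (algebraMap (𝓞 K) K x * (θ - μ))
        = sunPsi b (algebraMap (𝓞 K) K (Multiplicative.toAdd (Multiplicative.ofAdd x)) * μ)
        * 1 := by rw [mul_one]; exact h1
    exact mul_left_cancel₀ h3 h4
  · rintro ⟨ν, hν⟩
    refine MonoidHom.ext fun x => ?_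
    rw [sunChi_apply, sunChi_apply]
    have h2 : algebraMap (𝓞 K) K (Multiplicative.toAdd x) * θ
        = algebraMap (𝓞 K) K (Multiplicative.toAdd x) * μ
          + algebraMap (𝓞 K) K (Multiplicative.toAdd x * ν) := by
      rw [map_mul]
      have : θ = μ + algebraMap (𝓞 K) K ν := by rw [← hν]; ring
      rw [this]
      ring
    rw [h2, sunPsi_add, sunPsi_coe, mul_one]

lemma sunPsi_sum {ι : Type*} (A : Finset ι) (g : ι → K) :
    sunPsi b (∑ s ∈ A, g s) = ∏ s ∈ A, sunPsi b (g s) := by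
  classical
  induction A using Finset.induction_on with
  | empty => simp [sunPsi_zero]
  | insert a s h ih =>
      rw [Finset.sum_insert h, Finset.prod_insert h, sunPsi_add, ih]

end SunChar

lemma sunProdOneSub {ι : Type*} [DecidableEq ι] (A : Finset ι) (f : ι → ℂ) :
    ∏ s ∈ A, (1 - f s) = ∑ J ∈ A.powerset, (-1 : ℂ) ^ J.card * ∏ s ∈ J, f s := by
  have h := Finset.prod_add (fun s => -f s) (fun _ => (1 : ℂ)) A
  have h1 : ∏ s ∈ A, (1 - f s) = ∏ s ∈ A, (-f s + 1) := by
    refine Finset.prod_congr rfl fun s _ => by ring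
  rw [h1, h]
  refine Finset.sum_congr rfl fun J _ => ?_
  rw [Finset.prod_const_one, mul_one]
  have : ∏ s ∈ J, (-f s) = ∏ s ∈ J, ((-1 : ℂ) * f s) := by
    refine Finset.prod_congr rfl fun s _ => by ring
  rw [this, Finset.prod_mul_distrib, Finset.prod_const]


/-- Let `K` be a number field whose ring of integers has a power integral basis, and let
`{α s + β s O_K}` be an `m`-cover of `O_K`. Then for any `μ ∈ K`, the collection of subsets
`I` with `∑_{s∈I} ω s / β s ∈ μ + O_K` is empty or has at least `2^m` elements. -/
theorem stmt8 (K : Type*) [Field K] [NumberField K]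
    (hpib : ∃ (γ : NumberField.RingOfIntegers K)
        (b : Module.Basis (Fin (Module.finrank ℚ K)) ℤ (NumberField.RingOfIntegers K)),
        ∀ i, b i = γ ^ (i : ℕ))
    (k m : ℕ) (α β : Fin k → NumberField.RingOfIntegers K) (hβ : ∀ s, β s ≠ 0)
    (hcov : ∀ x : NumberField.RingOfIntegers K,
      m ≤ (univ.filter fun s => β s ∣ x - α s).card)
    (ω : Fin k → NumberField.RingOfIntegers K) (μ : K) :
    (univ.filter fun I : Finset (Fin k) =>
        ∃ ν : NumberField.RingOfIntegers K,
          ∑ s ∈ I, (ω s : K) / (β s : K) - μ = (ν : K)) = ∅ ∨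
      2 ^ m ≤ (univ.filter fun I : Finset (Fin k) =>
        ∃ ν : NumberField.RingOfIntegers K,
          ∑ s ∈ I, (ω s : K) / (β s : K) - μ = (ν : K)).card := by
  classical
  obtain ⟨γ, b, hb⟩ := hpib
  by_cases hS : (univ.filter fun I : Finset (Fin k) =>
      ∃ ν : NumberField.RingOfIntegers K,
        ∑ s ∈ I, (ω s : K) / (β s : K) - μ = (ν : K)) = ∅
  · exact Or.inl hS
  right
  set θf : Finset (Fin k) → K := fun J => ∑ s ∈ J, (ω s : K) / (β s : K) with hθf
  set ζf : Finset (Fin k) → ℂ :=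
    fun J => sunPsi b (-(∑ s ∈ J, ((ω s : K) * (α s : K)) / (β s : K))) with hζf
  set w : Finset (Fin k) → ℂ := fun J =>
    if sunChi b (θf J) = sunChi b μ then (-1 : ℂ) ^ J.card * ζf J else 0 with hw
  have hζne : ∀ J, ζf J ≠ 0 := fun J => sunPsi_ne_zero b _
  -- The main relations coming from the covering hypothesis.
  have hrel : ∀ U : Finset (Fin k), U.card < m →
      ∑ J ∈ univ.powerset.filter (fun J => J ∩ U = ∅), w J = 0 := by
    intro U hU
    have hxrel : ∀ x : Multiplicative (NumberField.RingOfIntegers K),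
        ∑ J ∈ Uᶜ.powerset, ((-1 : ℂ) ^ J.card * ζf J) * sunChi b (θf J) x = 0 := by
      intro x
      set y : NumberField.RingOfIntegers K := Multiplicative.toAdd x with hy
      set f : Fin k → ℂ := fun s =>
        sunPsi b (((ω s * (y - α s) : NumberField.RingOfIntegers K) : K) / (β s : K)) with hf
      have hprod : ∏ s ∈ Uᶜ, (1 - f s) = 0 := by
        have hsub : ¬ (univ.filter fun s => β s ∣ y - α s) ⊆ U := by
          intro hsub
          have h1 := Finset.card_le_card hsub
          have h2 := hcov y
          omega
        obtain ⟨t, ht1, ht2⟩ := Finset.not_subset.1 hsub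
        have htc : β t ∣ y - α t := (Finset.mem_filter.1 ht1).2
        refine Finset.prod_eq_zero (Finset.mem_compl.2 ht2) ?_
        obtain ⟨z, hz⟩ := htc
        have hβt : (β t : K) ≠ 0 := fun h =>
          hβ t (NumberField.RingOfIntegers.coe_eq_zero_iff.mp h)
        have hval : ((ω t * (y - α t) : NumberField.RingOfIntegers K) : K) / (β t : K)
            = algebraMap (NumberField.RingOfIntegers K) K (ω t * z) := by
          rw [show (ω t * (y - α t) : NumberField.RingOfIntegers K) = ω t * (β t * z) from by
            rw [hz]]
          simp only [NumberField.RingOfIntegers.coe_eq_algebraMap, map_mul]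
          field_simp
        have : f t = 1 := by
          rw [hf]
          simp only
          rw [hval, sunPsi_coe]
        rw [this]
        ring
      have hJprod : ∀ J ∈ Uᶜ.powerset, ∏ s ∈ J, f s = ζf J * sunChi b (θf J) x := by
        intro J hJm
        have hsum : ∑ s ∈ J,
            (((ω s * (y - α s) : NumberField.RingOfIntegers K) : K) / (β s : K))
            = algebraMap (NumberField.RingOfIntegers K) K y * θf J
              + -(∑ s ∈ J, ((ω s : K) * (α s : K)) / (β s : K)) := by
          rw [← sub_eq_add_neg, hθf]
          simp only
          rw [Finset.mul_sum, ← Finset.sum_sub_distrib]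
          refine Finset.sum_congr rfl fun s _ => ?_
          simp only [NumberField.RingOfIntegers.coe_eq_algebraMap, map_mul, map_sub]
          ring
        calc ∏ s ∈ J, f s
            = sunPsi b (∑ s ∈ J,
                (((ω s * (y - α s) : NumberField.RingOfIntegers K) : K) / (β s : K))) :=
              (sunPsi_sum b J _).symm
          _ = sunPsi b (algebraMap (NumberField.RingOfIntegers K) K y * θf J)
                * sunPsi b (-(∑ s ∈ J, ((ω s : K) * (α s : K)) / (β s : K))) := by
              rw [hsum, sunPsi_add]
          _ = ζf J * sunChi b (θf J) x := by
              rw [hζf, sunChi_apply, ← hy]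
              simp only
              ring
      calc ∑ J ∈ Uᶜ.powerset, ((-1 : ℂ) ^ J.card * ζf J) * sunChi b (θf J) x
          = ∑ J ∈ Uᶜ.powerset, (-1 : ℂ) ^ J.card * ∏ s ∈ J, f s := by
            refine Finset.sum_congr rfl fun J hJm => ?_
            rw [hJprod J hJm]
            ring
        _ = ∏ s ∈ Uᶜ, (1 - f s) := (sunProdOneSub Uᶜ f).symm
        _ = 0 := hprod
    -- Linear independence of characters
    set T := Uᶜ.powerset.image (fun J => sunChi b (θf J)) with hT
    set g : (Multiplicative (NumberField.RingOfIntegers K) →* ℂ) → ℂ := fun χ =>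
      ∑ J ∈ Uᶜ.powerset.filter (fun J => sunChi b (θf J) = χ), (-1 : ℂ) ^ J.card * ζf J with hg
    have hfun : ∑ χ ∈ T, g χ • (⇑χ : Multiplicative (NumberField.RingOfIntegers K) → ℂ) = 0 := by
      funext x
      rw [Finset.sum_apply]
      simp only [Pi.smul_apply, smul_eq_mul, Pi.zero_apply]
      calc ∑ χ ∈ T, g χ * χ x
          = ∑ χ ∈ T, ∑ J ∈ Uᶜ.powerset.filter (fun J => sunChi b (θf J) = χ),
              ((-1 : ℂ) ^ J.card * ζf J) * sunChi b (θf J) x := by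
            refine Finset.sum_congr rfl fun χ hχ => ?_
            rw [hg]
            simp only
            rw [Finset.sum_mul]
            refine Finset.sum_congr rfl fun J hJ => ?_
            rw [(Finset.mem_filter.1 hJ).2]
        _ = ∑ J ∈ Uᶜ.powerset, ((-1 : ℂ) ^ J.card * ζf J) * sunChi b (θf J) x :=
            Finset.sum_fiberwise_of_maps_to (fun J hJ => Finset.mem_image_of_mem _ hJ) _
        _ = 0 := hxrel x
    have hind := linearIndependent_iff'.1
      (linearIndependent_monoidHom (Multiplicative (NumberField.RingOfIntegers K)) ℂ) T g hfun
    have hgμ : g (sunChi b μ) = 0 := by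
      by_cases hmem : sunChi b μ ∈ T
      · exact hind _ hmem
      · rw [hg]
        simp only
        have hempty : Uᶜ.powerset.filter (fun J => sunChi b (θf J) = sunChi b μ) = ∅ := by
          rw [Finset.filter_eq_empty_iff]
          intro J hJm hEq
          exact hmem (Finset.mem_image.2 ⟨J, hJm, hEq⟩)
        rw [hempty, Finset.sum_empty]
    have hset : univ.powerset.filter (fun J : Finset (Fin k) => J ∩ U = ∅) = Uᶜ.powerset := by
      ext J
      simp only [Finset.mem_filter, Finset.mem_powerset, Finset.subset_univ, true_and]
      constructor
      · intro h a haJ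
        rw [Finset.mem_compl]
        intro haU
        have hmem : a ∈ J ∩ U := Finset.mem_inter.2 ⟨haJ, haU⟩
        rw [h] at hmem
        exact absurd hmem (Finset.notMem_empty a)
      · intro h
        rw [Finset.eq_empty_iff_forall_notMem]
        intro a ha
        obtain ⟨haJ, haU⟩ := Finset.mem_inter.1 ha
        exact absurd haU (Finset.mem_compl.1 (h haJ))
    calc ∑ J ∈ univ.powerset.filter (fun J => J ∩ U = ∅), w J
        = ∑ J ∈ Uᶜ.powerset, w J := by rw [hset]
      _ = ∑ J ∈ Uᶜ.powerset.filter (fun J => sunChi b (θf J) = sunChi b μ),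
            (-1 : ℂ) ^ J.card * ζf J := by
          rw [Finset.sum_filter]
      _ = 0 := hgμ
  -- Identify the support of `w` with the set in question.
  have hSw : (univ.filter fun I : Finset (Fin k) =>
        ∃ ν : NumberField.RingOfIntegers K,
          ∑ s ∈ I, (ω s : K) / (β s : K) - μ = (ν : K))
      = univ.filter (fun J : Finset (Fin k) => w J ≠ 0) := by
    refine Finset.filter_congr fun I _ => ?_
    have hiff := sunChi_eq_iff b γ hb (θf I) μ
    constructor
    · rintro ⟨ν, hν⟩
      have hchi : sunChi b (θf I) = sunChi b μ := by
        refine hiff.2 ⟨ν, ?_⟩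
        rw [hθf]
        simp only
        rw [← NumberField.RingOfIntegers.coe_eq_algebraMap]
        exact hν
      rw [hw]
      simp only
      rw [if_pos hchi]
      exact mul_ne_zero (pow_ne_zero _ (by norm_num)) (hζne I)
    · intro hne
      rw [hw] at hne
      simp only at hne
      by_cases hc : sunChi b (θf I) = sunChi b μ
      · obtain ⟨ν, hν⟩ := hiff.1 hc
        refine ⟨ν, ?_⟩
        rw [NumberField.RingOfIntegers.coe_eq_algebraMap]
        rw [hθf] at hν
        simp only at hν
        exact hν
      · rw [if_neg hc] at hne
        exact absurd rfl hne
  obtain ⟨I₀, hI₀⟩ := Finset.nonempty_of_ne_empty hS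
  have hwI₀ : w I₀ ≠ 0 := by
    rw [hSw] at hI₀
    exact (Finset.mem_filter.1 hI₀).2
  rw [hSw]
  exact sunComb m w hrel I₀ hwI₀
end

section
/- Let K be an algebraic number field whose ring of integers O_K has a power integral basis, and suppose {α_s + β_s O_K}_{s=1}^k is a cover of O_K (every element of O_K lies in at least one class). Let ω_1,...,ω_k ∈ O_K. Then for every subset J ⊆ {1,...,k} there exists a subset I ⊆ {1,...,k} with I ≠ J such that Σ_{s∈I} ω_s/β_s − Σ_{s∈J} ω_s/β_s ∈ O_K. -/
open Finset NumberField

noncomputable def ee (q : ℚ) : ℂ := Complex.exp (2 * Real.pi * Complex.I * q)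

lemma ee_add (a b : ℚ) : ee (a + b) = ee a * ee b := by
  rw [ee, ee, ee, ← Complex.exp_add]; push_cast; ring_nf

lemma ee_ne_zero (q : ℚ) : ee q ≠ 0 := Complex.exp_ne_zero _

lemma ee_intCast (m : ℤ) : ee m = 1 := by
  rw [ee]
  rw [show ((2:ℂ) * Real.pi * Complex.I * (m:ℚ) = m * (2 * Real.pi * Complex.I)) by
    push_cast; ring]
  exact Complex.exp_int_mul_two_pi_mul_I m

lemma two_pi_I_ne_zero' : (2 * (Real.pi:ℂ) * Complex.I) ≠ 0 :=
  mul_ne_zero (mul_ne_zero two_ne_zero (Complex.ofReal_ne_zero.mpr Real.pi_ne_zero))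
    Complex.I_ne_zero

lemma ee_eq_one_iff (q : ℚ) : ee q = 1 ↔ ∃ m : ℤ, q = m := by
  constructor
  · intro h
    rw [ee, Complex.exp_eq_one_iff] at h
    obtain ⟨m, hm⟩ := h
    refine ⟨m, ?_⟩
    have : (q : ℂ) = (m : ℂ) := by
      apply mul_left_cancel₀ two_pi_I_ne_zero'
      rw [hm]; ring
    exact_mod_cast this
  · rintro ⟨m, rfl⟩; exact ee_intCast m

lemma ee_nat_mul (c : ℕ) (q : ℚ) : ee (c * q) = ee q ^ c := by
  rw [ee, ee, ← Complex.exp_nat_mul]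
  push_cast; ring_nf

lemma ee_sum {ι : Type*} (s : Finset ι) (f : ι → ℚ) :
    ee (∑ i ∈ s, f i) = ∏ i ∈ s, ee (f i) := by
  classical
  induction s using Finset.induction with
  | empty => simp [ee]
  | insert _ _ h ih => rw [Finset.sum_insert h, Finset.prod_insert h, ee_add, ih]

/-- Let `K` be a number field whose ring of integers has a power integral basis, and let
`{α s + β s O_K}` be a cover of `O_K`. Then for every subset `J` there is a subset `I ≠ J`
with `∑_{s∈I} ω s / β s - ∑_{s∈J} ω s / β s ∈ O_K`. -/
theorem stmt9 (K : Type*) [Field K] [NumberField K]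
    (hpib : ∃ (γ : NumberField.RingOfIntegers K)
        (b : Module.Basis (Fin (Module.finrank ℚ K)) ℤ (NumberField.RingOfIntegers K)),
        ∀ i, b i = γ ^ (i : ℕ))
    (k : ℕ) (α β : Fin k → NumberField.RingOfIntegers K) (hβ : ∀ s, β s ≠ 0)
    (hcov : ∀ x : NumberField.RingOfIntegers K, ∃ s, β s ∣ x - α s)
    (ω : Fin k → NumberField.RingOfIntegers K) (J : Finset (Fin k)) :
    ∃ I : Finset (Fin k), I ≠ J ∧
      ∃ ν : NumberField.RingOfIntegers K,
        ∑ s ∈ I, (ω s : K) / (β s : K) - ∑ s ∈ J, (ω s : K) / (β s : K) = (ν : K) := by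
  classical
  set n := Module.finrank ℚ K with hn
  obtain ⟨γ, b, hb⟩ := hpib
  have hn0 : 0 < n := Module.finrank_pos
  let bK : Module.Basis (Fin n) ℚ K := b.localizationLocalization ℚ (nonZeroDivisors ℤ) K
  have hbK : ∀ i, bK i = algebraMap (𝓞 K) K (b i) := fun i =>
    Module.Basis.localizationLocalization_apply ℚ (nonZeroDivisors ℤ) K b i
  have hbKrepr : ∀ (x : 𝓞 K) (i : Fin n),
      bK.repr (algebraMap (𝓞 K) K x) i = ((b.repr x i : ℤ) : ℚ) := fun x i =>
    Module.Basis.localizationLocalization_repr_algebraMap ℚ (nonZeroDivisors ℤ) K b x i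
  let L : Fin n := ⟨n - 1, by omega⟩
  let T : K →ₗ[ℚ] ℚ := bK.coord L
  let Z : Subring ℚ := (Int.castRingHom ℚ).range
  have hZ : ∀ q : ℚ, q ∈ Z ↔ ∃ m : ℤ, q = m := by
    intro q; constructor
    · rintro ⟨m, hm⟩; exact ⟨m, hm.symm⟩
    · rintro ⟨m, hm⟩; exact ⟨m, hm.symm⟩
  have hTint : ∀ x : 𝓞 K, T (algebraMap (𝓞 K) K x) ∈ Z := fun x =>
    ⟨b.repr x L, (hbKrepr x L).symm⟩
  -- integral coordinates imply integrality
  have L0 : ∀ ξ : K, (∀ i, bK.repr ξ i ∈ Z) → ∃ y : 𝓞 K, ξ = algebraMap (𝓞 K) K y := by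
    intro ξ h
    have h' : ∀ i, ∃ m : ℤ, bK.repr ξ i = m := fun i => (hZ _).1 (h i)
    choose m hm using h'
    refine ⟨∑ i, m i • b i, ?_⟩
    rw [map_sum]
    have : ∀ i : Fin n, algebraMap (𝓞 K) K (m i • b i) = bK.repr ξ i • bK i := by
      intro i
      rw [map_zsmul, hbK, hm i, Int.cast_smul_eq_zsmul]
    rw [Finset.sum_congr rfl (fun i _ => this i)]
    exact (bK.sum_repr ξ).symm
  -- the key duality lemma: T(γ^j · δ) ∈ ℤ for all j implies δ ∈ O_K
  have hKey : ∀ δ : K, (∀ j : Fin n, T (bK j * δ) ∈ Z) →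
      ∃ ν : 𝓞 K, δ = algebraMap (𝓞 K) K ν := by
    intro δ hδ
    set d : Fin n → ℚ := fun i => bK.repr δ i with hd
    set r : Fin n → Fin n → ℚ := fun j i => T (bK j * bK i) with hr
    have hr_int : ∀ j i, r j i ∈ Z := by
      intro j i
      have : bK j * bK i = algebraMap (𝓞 K) K (b j * b i) := by
        rw [hbK, hbK, map_mul]
      rw [hr]; dsimp only; rw [this]; exact hTint _
    have hr_lt : ∀ j i : Fin n, (j : ℕ) + i < n →
        r j i = if (j : ℕ) + i = n - 1 then 1 else 0 := by
      intro j i hji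
      have hbb : b j * b i = b ⟨(j : ℕ) + i, hji⟩ := by
        rw [hb, hb, hb, ← pow_add]
      have : bK j * bK i = algebraMap (𝓞 K) K (b ⟨(j : ℕ) + i, hji⟩) := by
        rw [hbK, hbK, ← map_mul, hbb]
      show T (bK j * bK i) = _
      rw [this]
      have := hbKrepr (b ⟨(j : ℕ) + i, hji⟩) L
      show bK.repr _ L = _
      rw [this, Module.Basis.repr_self, Finsupp.single_apply]
      by_cases hc : (j : ℕ) + i = n - 1
      · have : (⟨(j : ℕ) + i, hji⟩ : Fin n) = L := by
          apply Fin.ext; simpa using hc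
        rw [if_pos this, if_pos hc]; simp
      · have : (⟨(j : ℕ) + i, hji⟩ : Fin n) ≠ L := by
          intro hcc; apply hc
          have := Fin.mk.inj_iff.mp hcc; simpa using this
        simp [this, hc]
    have expand : ∀ j : Fin n, T (bK j * δ) = ∑ i, d i * r j i := by
      intro j
      conv_lhs => rw [← bK.sum_repr δ]
      rw [Finset.mul_sum, map_sum]
      apply Finset.sum_congr rfl
      intro i _
      rw [mul_smul_comm, map_smul, smul_eq_mul]
    have main : ∀ t : ℕ, ∀ i : Fin n, n - 1 - (i : ℕ) = t → d i ∈ Z := by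
      intro t
      induction t using Nat.strong_induction_on with
      | _ t IH =>
        intro i hi
        have hiub : (i : ℕ) < n := i.2
        have hjlt : n - 1 - (i : ℕ) < n := by omega
        set j : Fin n := ⟨n - 1 - (i : ℕ), hjlt⟩ with hj
        have hsum : (j : ℕ) + (i : ℕ) = n - 1 := by simp [hj]; omega
        have heq := expand j
        have hsplit : T (bK j * δ) = d i * r j i + ∑ i' ∈ univ.erase i, d i' * r j i' := by
          rw [heq, ← Finset.add_sum_erase _ _ (Finset.mem_univ i)]
        have hrji : r j i = 1 := by
          rw [hr_lt j i (by omega), if_pos hsum]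
        have hrest : ∑ i' ∈ univ.erase i, d i' * r j i' ∈ Z := by
          apply Subring.sum_mem
          intro i' hi'
          have hne : i' ≠ i := (Finset.mem_erase.mp hi').1
          by_cases hcase : (j : ℕ) + (i' : ℕ) < n
          · have : (j : ℕ) + (i' : ℕ) ≠ n - 1 := by
              intro hc
              apply hne; apply Fin.ext; omega
            rw [hr_lt j i' hcase, if_neg this, mul_zero]
            exact Subring.zero_mem Z
          · have hge : n ≤ (j : ℕ) + (i' : ℕ) := by omega
            have ht' : n - 1 - (i' : ℕ) < t := by omega
            exact Z.mul_mem (IH _ ht' i' rfl) (hr_int j i')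
        have : d i = T (bK j * δ) - ∑ i' ∈ univ.erase i, d i' * r j i' := by
          rw [hsplit, hrji, mul_one]; ring
        rw [this]
        exact Z.sub_mem (hδ j) hrest
    exact L0 δ (fun i => main _ i rfl)
  -- denominator clearing
  have hB1 : ∀ ξ : K, ∃ B : ℕ, 0 < B ∧ ∃ y : 𝓞 K, (B : K) * ξ = algebraMap (𝓞 K) K y := by
    intro ξ
    refine ⟨∏ i, (bK.repr ξ i).den, Finset.prod_pos (fun i _ => (bK.repr ξ i).pos), ?_⟩
    apply L0
    intro i
    have hcast : (((∏ i', (bK.repr ξ i').den : ℕ) : K)) * ξ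
        = (((∏ i', (bK.repr ξ i').den : ℕ) : ℚ)) • ξ := by
      rw [Algebra.smul_def, map_natCast]
    rw [hcast, map_smul]
    have hdvd : (bK.repr ξ i).den ∣ ∏ i', (bK.repr ξ i').den :=
      Finset.dvd_prod_of_mem _ (Finset.mem_univ i)
    obtain ⟨t, ht⟩ := hdvd
    refine (hZ _).2 ⟨(bK.repr ξ i).num * t, ?_⟩
    show (((∏ i', (bK.repr ξ i').den : ℕ) : ℚ)) * bK.repr ξ i = _
    rw [ht]
    have hden : ((bK.repr ξ i).den : ℚ) * bK.repr ξ i = (bK.repr ξ i).num := by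
      have h0 : ((bK.repr ξ i).den : ℚ) ≠ 0 := by
        exact_mod_cast (bK.repr ξ i).den_nz
      rw [mul_comm, ← Rat.num_div_den (bK.repr ξ i)]
      rw [Rat.num_div_den]
      field_simp
      exact Rat.mul_den_eq_num _
    push_cast
    rw [mul_comm ((bK.repr ξ i).den : ℚ) (t : ℚ), mul_assoc, hden]
    ring
  -- contradiction setup
  by_contra hcon
  push_neg at hcon
  set θ : Finset (Fin k) → K := fun I => ∑ s ∈ I, (ω s : K) / (β s : K) with hθ
  have hnotin : ∀ I : Finset (Fin k), I ≠ J →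
      ∀ y : 𝓞 K, θ I - θ J ≠ algebraMap (𝓞 K) K y := by
    intro I hI y h
    exact hcon I hI y h
  -- a common denominator B
  have hBs : ∀ s : Fin k, ∃ B : ℕ, 0 < B ∧
      ∃ y : 𝓞 K, (B : K) * ((ω s : K) / (β s : K)) = algebraMap (𝓞 K) K y :=
    fun s => hB1 _
  choose Bs hBspos ys hys using hBs
  set B : ℕ := ∏ s, Bs s with hBdef
  have hBpos : 0 < B := Finset.prod_pos (fun s _ => hBspos s)
  have hBs' : ∀ s : Fin k, ∃ y : 𝓞 K,
      (B : K) * ((ω s : K) / (β s : K)) = algebraMap (𝓞 K) K y := by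
    intro s
    obtain ⟨t, ht⟩ : Bs s ∣ B := Finset.dvd_prod_of_mem _ (Finset.mem_univ s)
    refine ⟨(t : 𝓞 K) * ys s, ?_⟩
    rw [map_mul, ← hys s, map_natCast, ht]
    push_cast
    ring
  choose yB hyB using hBs'
  have hBθ : ∀ I : Finset (Fin k),
      (B : K) * θ I = algebraMap (𝓞 K) K (∑ s ∈ I, yB s) := by
    intro I
    rw [hθ]
    dsimp only
    rw [Finset.mul_sum, map_sum]
    exact Finset.sum_congr rfl fun s _ => hyB s
  have hBδ : ∀ I : Finset (Fin k), ∃ y : 𝓞 K,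
      (B : K) * (θ I - θ J) = algebraMap (𝓞 K) K y := by
    intro I
    refine ⟨∑ s ∈ I, yB s - ∑ s ∈ J, yB s, ?_⟩
    rw [mul_sub, hBθ, hBθ, map_sub]
  -- the box of lattice points
  let xc : (Fin n → Fin B) → 𝓞 K := fun c => ∑ i, (c i : ℕ) • b i
  let G : K → ℂ := fun δ =>
    ∑ c : Fin n → Fin B, ee (T (algebraMap (𝓞 K) K (xc c) * δ))
  have hG1 : ∀ (c : Fin n → Fin B) (δ : K),
      T (algebraMap (𝓞 K) K (xc c) * δ) = ∑ i, ((c i : ℕ) : ℚ) * T (bK i * δ) := by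
    intro c δ
    have h1 : algebraMap (𝓞 K) K (xc c) = ∑ i, (c i : ℕ) • bK i := by
      show algebraMap (𝓞 K) K (∑ i, (c i : ℕ) • b i) = _
      rw [map_sum]
      exact Finset.sum_congr rfl fun i _ => by rw [map_nsmul, hbK]
    rw [h1, Finset.sum_mul, map_sum]
    apply Finset.sum_congr rfl
    intro i _
    rw [smul_mul_assoc, map_nsmul, nsmul_eq_mul]
  have hG2 : ∀ δ : K,
      G δ = ∏ i, ∑ j : Fin B, (ee (T (bK i * δ))) ^ (j : ℕ) := by
    intro δ
    have : ∀ c : Fin n → Fin B, ee (T (algebraMap (𝓞 K) K (xc c) * δ))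
        = ∏ i, (ee (T (bK i * δ))) ^ ((c i : ℕ)) := by
      intro c
      rw [hG1 c δ, ee_sum]
      exact Finset.prod_congr rfl fun i _ => by
        rw [show ((c i : ℕ) : ℚ) * T (bK i * δ) = ((c i : ℕ) : ℚ) * T (bK i * δ) from rfl,
          ee_nat_mul]
    show (∑ c : Fin n → Fin B, ee (T (algebraMap (𝓞 K) K (xc c) * δ))) = _
    rw [Finset.sum_congr rfl fun c _ => this c]
    rw [Finset.prod_univ_sum]
    rw [Fintype.piFinset_univ]
  have hζB : ∀ (δ : K) (y : 𝓞 K), (B : K) * δ = algebraMap (𝓞 K) K y →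
      ∀ i : Fin n, (ee (T (bK i * δ))) ^ B = 1 := by
    intro δ y hy i
    rw [← ee_nat_mul]
    have h1 : (B : ℚ) * T (bK i * δ) = T (bK i * ((B : K) * δ)) := by
      rw [show bK i * ((B : K) * δ) = (B : ℚ) • (bK i * δ) by
        rw [Algebra.smul_def, map_natCast]; ring]
      rw [map_smul, smul_eq_mul]
    rw [h1, hy]
    have : bK i * algebraMap (𝓞 K) K y = algebraMap (𝓞 K) K (b i * y) := by
      rw [hbK, ← map_mul]
    rw [this]
    obtain ⟨m, hm⟩ := (hZ _).1 (hTint (b i * y))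
    rw [hm, ee_intCast]
  have hG0 : ∀ δ : K, (∃ y : 𝓞 K, (B : K) * δ = algebraMap (𝓞 K) K y) →
      (∀ y : 𝓞 K, δ ≠ algebraMap (𝓞 K) K y) → G δ = 0 := by
    intro δ hy1 hno
    obtain ⟨y, hy⟩ := hy1
    have : ¬ (∀ j : Fin n, T (bK j * δ) ∈ Z) := by
      intro hall
      obtain ⟨ν, hν⟩ := hKey δ hall
      exact hno ν hν
    push_neg at this
    obtain ⟨j, hj⟩ := this
    have hζ1 : ee (T (bK j * δ)) ≠ 1 := by
      intro h1
      obtain ⟨m, hm⟩ := (ee_eq_one_iff _).1 h1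
      exact hj ((hZ _).2 ⟨m, hm⟩)
    rw [hG2]
    apply Finset.prod_eq_zero (Finset.mem_univ j)
    rw [Fin.sum_univ_eq_sum_range (fun m => (ee (T (bK j * δ))) ^ m) B]
    rw [geom_sum_eq hζ1]
    rw [hζB δ y hy j]
    simp
  have hGzero : G 0 = ((B : ℂ)) ^ n := by
    have : ∀ c : Fin n → Fin B, ee (T (algebraMap (𝓞 K) K (xc c) * 0)) = 1 := by
      intro c
      rw [mul_zero, map_zero]
      rw [show (0 : ℚ) = ((0 : ℤ) : ℚ) by norm_num, ee_intCast]
    show (∑ c : Fin n → Fin B, ee (T (algebraMap (𝓞 K) K (xc c) * 0))) = _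
    rw [Finset.sum_congr rfl fun c _ => this c, Finset.sum_const, Finset.card_univ]
    rw [Fintype.card_fun]
    simp [Fintype.card_fin]
  -- the cover makes the product vanish
  have hvanish : ∀ x : 𝓞 K,
      ∏ s : Fin k, (1 - ee (T ((algebraMap (𝓞 K) K (x - α s)) * ((ω s : K) / (β s : K))))) = 0 := by
    intro x
    obtain ⟨s, c, hc⟩ := hcov x
    apply Finset.prod_eq_zero (Finset.mem_univ s)
    have hβK : ((β s : K)) ≠ 0 := by
      intro h
      exact hβ s (by exact_mod_cast h)
    have harg : (algebraMap (𝓞 K) K (x - α s)) * ((ω s : K) / (β s : K))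
        = algebraMap (𝓞 K) K (c * ω s) := by
      rw [hc, map_mul, map_mul]
      rw [show (algebraMap (𝓞 K) K (β s)) = (β s : K) from rfl]
      rw [show (algebraMap (𝓞 K) K (ω s)) = (ω s : K) from rfl]
      field_simp
    rw [harg]
    obtain ⟨m, hm⟩ := (hZ _).1 (hTint (c * ω s))
    rw [hm, ee_intCast]
    ring
  -- expansion of the product
  set φ : Finset (Fin k) → K := fun I => ∑ s ∈ I, (α s : K) * ((ω s : K) / (β s : K)) with hφ
  have hexpand : ∀ x : 𝓞 K,
      ∏ s : Fin k, (1 - ee (T ((algebraMap (𝓞 K) K (x - α s)) * ((ω s : K) / (β s : K)))))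
        = ∑ I ∈ (univ : Finset (Fin k)).powerset,
            (-1 : ℂ) ^ I.card * ee (- T (φ I)) * ee (T (algebraMap (𝓞 K) K x * θ I)) := by
    intro x
    have hstep1 : ∀ s : Fin k,
        (1 : ℂ) - ee (T ((algebraMap (𝓞 K) K (x - α s)) * ((ω s : K) / (β s : K))))
        = (-(ee (T ((algebraMap (𝓞 K) K (x - α s)) * ((ω s : K) / (β s : K)))))) + 1 := by
      intro s; ring
    rw [Finset.prod_congr rfl fun s _ => hstep1 s, Finset.prod_add]
    apply Finset.sum_congr rfl
    intro I hI
    rw [Finset.prod_const_one, mul_one]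
    rw [show (∏ i ∈ I, -ee (T ((algebraMap (𝓞 K) K (x - α i)) * ((ω i : K) / (β i : K)))))
        = (-1 : ℂ) ^ I.card
          * ∏ i ∈ I, ee (T ((algebraMap (𝓞 K) K (x - α i)) * ((ω i : K) / (β i : K)))) by
      rw [Finset.prod_congr rfl (fun i _ => (neg_one_mul
            (ee (T ((algebraMap (𝓞 K) K (x - α i)) * ((ω i : K) / (β i : K)))))).symm),
        Finset.prod_mul_distrib, Finset.prod_const]]
    rw [← ee_sum]
    have hsplit : ∑ s ∈ I, T ((algebraMap (𝓞 K) K (x - α s)) * ((ω s : K) / (β s : K)))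
        = T (algebraMap (𝓞 K) K x * θ I) + (- T (φ I)) := by
      rw [← map_sum]
      have : ∑ s ∈ I, (algebraMap (𝓞 K) K (x - α s)) * ((ω s : K) / (β s : K))
          = algebraMap (𝓞 K) K x * θ I - φ I := by
        rw [hθ, hφ]
        dsimp only
        rw [Finset.mul_sum, ← Finset.sum_sub_distrib]
        apply Finset.sum_congr rfl
        intro s _
        rw [map_sub]
        rw [show (algebraMap (𝓞 K) K (α s)) = (α s : K) from rfl]
        ring
      rw [this, map_sub]
      ring
    rw [hsplit, ee_add]
    ring
  -- main identity
  have hmain : ∑ I ∈ (univ : Finset (Fin k)).powerset,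
      (-1 : ℂ) ^ I.card * ee (- T (φ I)) * G (θ I - θ J) = 0 := by
    have hz : ∀ c : Fin n → Fin B,
        (∏ s : Fin k, (1 - ee (T ((algebraMap (𝓞 K) K (xc c - α s)) * ((ω s : K) / (β s : K))))))
          * ee (- T (algebraMap (𝓞 K) K (xc c) * θ J)) = 0 := by
      intro c
      rw [hvanish (xc c), zero_mul]
    have hterm : ∀ (I : Finset (Fin k)) (c : Fin n → Fin B),
        (-1 : ℂ) ^ I.card * ee (- T (φ I))
            * ee (T (algebraMap (𝓞 K) K (xc c) * (θ I - θ J)))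
        = ((-1 : ℂ) ^ I.card * ee (- T (φ I)) * ee (T (algebraMap (𝓞 K) K (xc c) * θ I)))
            * ee (- T (algebraMap (𝓞 K) K (xc c) * θ J)) := by
      intro I c
      rw [mul_sub, map_sub, sub_eq_add_neg, ee_add]
      ring
    calc ∑ I ∈ (univ : Finset (Fin k)).powerset,
          (-1 : ℂ) ^ I.card * ee (- T (φ I)) * G (θ I - θ J)
        = ∑ I ∈ (univ : Finset (Fin k)).powerset, ∑ c : Fin n → Fin B,
            (-1 : ℂ) ^ I.card * ee (- T (φ I))
              * ee (T (algebraMap (𝓞 K) K (xc c) * (θ I - θ J))) := by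
          apply Finset.sum_congr rfl
          intro I _
          rw [show G (θ I - θ J)
              = ∑ c : Fin n → Fin B, ee (T (algebraMap (𝓞 K) K (xc c) * (θ I - θ J))) from rfl]
          rw [Finset.mul_sum]
      _ = ∑ c : Fin n → Fin B, ∑ I ∈ (univ : Finset (Fin k)).powerset,
            (-1 : ℂ) ^ I.card * ee (- T (φ I))
              * ee (T (algebraMap (𝓞 K) K (xc c) * (θ I - θ J))) := Finset.sum_comm
      _ = ∑ c : Fin n → Fin B,
            (∏ s : Fin k,
              (1 - ee (T ((algebraMap (𝓞 K) K (xc c - α s)) * ((ω s : K) / (β s : K))))))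
              * ee (- T (algebraMap (𝓞 K) K (xc c) * θ J)) := by
          apply Finset.sum_congr rfl
          intro c _
          rw [hexpand (xc c), Finset.sum_mul]
          apply Finset.sum_congr rfl
          intro I _
          exact hterm I c
      _ = 0 := by
          rw [Finset.sum_congr rfl fun c _ => hz c]
          simp
  -- evaluate the sum: only the term I = J survives
  have hJmem : J ∈ (univ : Finset (Fin k)).powerset := Finset.mem_powerset.2 (Finset.subset_univ J)
  have hsingle : ∑ I ∈ (univ : Finset (Fin k)).powerset,
      (-1 : ℂ) ^ I.card * ee (- T (φ I)) * G (θ I - θ J)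
      = (-1 : ℂ) ^ J.card * ee (- T (φ J)) * G 0 := by
    rw [Finset.sum_eq_single J]
    · rw [sub_self]
    · intro I _ hIJ
      rw [hG0 (θ I - θ J) (hBδ I) (hnotin I hIJ), mul_zero]
    · intro h; exact absurd hJmem h
  rw [hsingle] at hmain
  have h1 : ((-1 : ℂ)) ^ J.card ≠ 0 := by
    apply pow_ne_zero; norm_num
  have h2 : ee (- T (φ J)) ≠ 0 := ee_ne_zero _
  have h3 : G 0 ≠ 0 := by
    rw [hGzero]
    apply pow_ne_zero
    exact_mod_cast hBpos.ne'
  exact (mul_ne_zero (mul_ne_zero h1 h2) h3) hmain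
end
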